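/- arXiv:1902.01088 — 11 statements merged into one kernel-verified Lean document; each statement's English description precedes it below -/
import Mathlib

section
/- Let (L,<) be a finite linear order with |L| = n, and let C be a family of non-empty intervals of L with the prefix/suffix property (for all I,J in C with I ⊆ J, I is either a prefix or a suffix of J). Then |C| ≤ 2n - 1. -/
/-- `I` is an interval (convex subset) of the linear order `L`. -/
def IsIntervalF {L : Type*} [LinearOrder L] (I : Finset L) : Prop :=
  ∀ x ∈ I, ∀ x' ∈ I, ∀ y, x < y → y < x' → y ∈ I

/-- `I` is a prefix of `J`: every element of `I` is below every element of `J \ I`. -/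
def IsPrefixOf {L : Type*} [LinearOrder L] (I J : Finset L) : Prop :=
  ∀ x ∈ I, ∀ y ∈ J \ I, x < y

/-- `I` is a suffix of `J`: every element of `J \ I` is below every element of `I`. -/
def IsSuffixOf {L : Type*} [LinearOrder L] (I J : Finset L) : Prop :=
  ∀ y ∈ J \ I, ∀ x ∈ I, y < x

lemma interval_eq_Icc {L : Type*} [LinearOrder L] [Fintype L] [LocallyFiniteOrder L] {I : Finset L}
    (h : IsIntervalF I) (hne : I.Nonempty) :
    I = Finset.Icc (I.min' hne) (I.max' hne) := by
  ext y
  simp only [Finset.mem_Icc]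
  constructor
  · intro hy; exact ⟨I.min'_le y hy, I.le_max' y hy⟩
  · rintro ⟨h1, h2⟩
    rcases eq_or_lt_of_le h1 with rfl | h1'
    · exact I.min'_mem hne
    rcases eq_or_lt_of_le h2 with rfl | h2'
    · exact I.max'_mem hne
    exact h _ (I.min'_mem hne) _ (I.max'_mem hne) y h1' h2'

/-- A prefix/suffix family of non-empty intervals of a finite linear order with `n`
elements has at most `2n - 1` members. -/
theorem stmt0 {L : Type*} [LinearOrder L] [Fintype L] (n : ℕ)
    (hn : Fintype.card L = n)
    (C : Finset (Finset L))
    (hne : ∀ I ∈ C, I.Nonempty)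
    (hint : ∀ I ∈ C, IsIntervalF I)
    (hps : ∀ I ∈ C, ∀ J ∈ C, I ⊆ J → IsPrefixOf I J ∨ IsSuffixOf I J) :
    C.card ≤ 2 * n - 1 := by
  rcases Nat.eq_zero_or_pos n with rfl | hnpos
  · have : C = ∅ := by
      rw [Finset.eq_empty_iff_forall_notMem]
      intro I hI
      obtain ⟨x, -⟩ := hne I hI
      have := Fintype.card_pos_iff.mpr ⟨x⟩
      omega
    simp [this]
  haveI : LocallyFiniteOrder L := Fintype.toLocallyFiniteOrder
  have e : L ≃o Fin n := (Fintype.orderIsoFinOfCardEq L hn).symm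
  -- comparability of endpoint pairs
  have key : ∀ I ∈ C, ∀ J ∈ C, ∀ (hI : I.Nonempty) (hJ : J.Nonempty),
      (I.min' hI ≤ J.min' hJ ∧ I.max' hI ≤ J.max' hJ) ∨
      (J.min' hJ ≤ I.min' hI ∧ J.max' hJ ≤ I.max' hI) := by
    have main : ∀ I ∈ C, ∀ J ∈ C, ∀ (hI : I.Nonempty) (hJ : J.Nonempty),
        I.min' hI < J.min' hJ → J.max' hJ < I.max' hI → False := by
      intro I hIC J hJC hI hJ h1 h2
      have hsub : J ⊆ I := by
        rw [interval_eq_Icc (hint I hIC) hI]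
        intro y hy
        rw [Finset.mem_Icc]
        exact ⟨le_of_lt (lt_of_lt_of_le h1 (J.min'_le y hy)),
               le_of_lt (lt_of_le_of_lt (J.le_max' y hy) h2)⟩
      have haI : I.min' hI ∈ I := I.min'_mem hI
      have haJ : I.min' hI ∉ J := fun h => absurd (J.min'_le _ h) (not_le.mpr h1)
      have hbI : I.max' hI ∈ I := I.max'_mem hI
      have hbJ : I.max' hI ∉ J := fun h => absurd (J.le_max' _ h) (not_le.mpr h2)
      rcases hps J hJC I hIC hsub with hp | hs
      · have := hp _ (J.min'_mem hJ) _ (Finset.mem_sdiff.mpr ⟨haI, haJ⟩)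
        exact absurd this (not_lt.mpr (le_of_lt h1))
      · have := hs _ (Finset.mem_sdiff.mpr ⟨hbI, hbJ⟩) _ (J.max'_mem hJ)
        exact absurd this (not_lt.mpr (le_of_lt h2))
    intro I hIC J hJC hI hJ
    rcases le_or_gt (I.min' hI) (J.min' hJ) with h1 | h1
    · rcases le_or_gt (I.max' hI) (J.max' hJ) with h2 | h2
      · exact Or.inl ⟨h1, h2⟩
      · rcases eq_or_lt_of_le h1 with heq | h1'
        · exact Or.inr ⟨heq.ge, le_of_lt h2⟩
        · exact absurd (main I hIC J hJC hI hJ h1' h2) (fun h => h)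
    · rcases le_or_gt (J.max' hJ) (I.max' hI) with h2 | h2
      · exact Or.inr ⟨le_of_lt h1, h2⟩
      · exact absurd (main J hJC I hIC hJ hI h1 h2) (fun h => h)
  set f : Finset L → ℕ := fun I =>
    if h : I.Nonempty then (e (I.min' h)).val + (e (I.max' h)).val else 0 with hf
  have hinj : Set.InjOn f C := by
    intro I hIC J hJC hfe
    have hI := hne I hIC
    have hJ := hne J hJC
    rw [hf] at hfe
    simp only [dif_pos hI, dif_pos hJ] at hfe
    have hends : I.min' hI = J.min' hJ ∧ I.max' hI = J.max' hJ := by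
      rcases key I hIC J hJC hI hJ with ⟨h1, h2⟩ | ⟨h1, h2⟩
      all_goals {
        have e1 := e.monotone h1
        have e2 := e.monotone h2
        have : e (I.min' hI) = e (J.min' hJ) ∧ e (I.max' hI) = e (J.max' hJ) := by
          constructor <;> (apply Fin.le_antisymm <;> first | assumption | (apply Fin.mk_le_mk.mpr ?_ ; omega) | omega)
        exact ⟨e.injective this.1, e.injective this.2⟩ }
    rw [interval_eq_Icc (hint I hIC) hI, interval_eq_Icc (hint J hJC) hJ,
        hends.1, hends.2]
  have hrange : ∀ I ∈ C, f I ∈ Finset.range (2 * n - 1) := by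
    intro I hIC
    have hI := hne I hIC
    rw [hf, Finset.mem_range]
    simp only [dif_pos hI]
    have := (e (I.min' hI)).isLt
    have := (e (I.max' hI)).isLt
    omega
  calc C.card ≤ (Finset.range (2 * n - 1)).card :=
        Finset.card_le_card_of_injOn f hrange hinj
    _ = 2 * n - 1 := Finset.card_range _
end

section
/- Let C be a family of non-empty intervals of a linear order (L,<) satisfying the prefix/suffix property. Define, for I, J ∈ C, I <ⁱ J if and only if either there exists x ∈ I with x < y for all y ∈ J, or there exists y ∈ J with x < y for all x ∈ I. Then <ⁱ is a strict linear (total) order on C (in particular, it is transitive and trichotomous on distinct intervals). -/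
/-- `I` is an interval (convex subset) of the linear order `L`. -/
def IsIntervalS {L : Type*} [LinearOrder L] (I : Set L) : Prop :=
  ∀ x ∈ I, ∀ x' ∈ I, ∀ y, x < y → y < x' → y ∈ I

/-- `I` is a prefix of `J`: every element of `I` is below every element of `J \ I`. -/
def SetIsPrefixOf {L : Type*} [LinearOrder L] (I J : Set L) : Prop :=
  ∀ x ∈ I, ∀ y ∈ J \ I, x < y

/-- `I` is a suffix of `J`: every element of `J \ I` is below every element of `I`. -/
def SetIsSuffixOf {L : Type*} [LinearOrder L] (I J : Set L) : Prop :=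
  ∀ y ∈ J \ I, ∀ x ∈ I, y < x

/-- The interval order `<ⁱ`: `I <ⁱ J` iff some element of `I` is below all of `J`, or
some element of `J` is above all of `I`. -/
def IntLt {L : Type*} [LinearOrder L] (I J : Set L) : Prop :=
  (∃ x ∈ I, ∀ y ∈ J, x < y) ∨ (∃ y ∈ J, ∀ x ∈ I, x < y)

/-- No `I` in the family can contain a point below all of `J` and a point above all of `J`. -/
lemma intlt_aux {L : Type*} [LinearOrder L] (C : Set (Set L))
    (hne : ∀ I ∈ C, I.Nonempty)
    (hint : ∀ I ∈ C, IsIntervalS I)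
    (hps : ∀ I ∈ C, ∀ J ∈ C, I ⊆ J → SetIsPrefixOf I J ∨ SetIsSuffixOf I J)
    {I J : Set L} (hI : I ∈ C) (hJ : J ∈ C)
    {x : L} (hxI : x ∈ I) (hx : ∀ z ∈ J, x < z)
    {y : L} (hyI : y ∈ I) (hy : ∀ z ∈ J, z < y) : False := by
  obtain ⟨z₀, hz₀⟩ := hne J hJ
  have hJI : J ⊆ I := fun z hz => hint I hI x hxI y hyI z (hx z hz) (hy z hz)
  have hxJ : x ∉ J := fun h => lt_irrefl x (hx x h)
  have hyJ : y ∉ J := fun h => lt_irrefl y (hy y h)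
  rcases hps J hJ I hI hJI with h | h
  · exact absurd (hx z₀ hz₀) (not_lt_of_gt (h z₀ hz₀ x ⟨hxI, hxJ⟩))
  · exact absurd (hy z₀ hz₀) (not_lt_of_gt (h y ⟨hyI, hyJ⟩ z₀ hz₀))

/-- Totality of `IntLt` on distinct members of a prefix/suffix family. -/
lemma intlt_total {L : Type*} [LinearOrder L] (C : Set (Set L))
    (hne : ∀ I ∈ C, I.Nonempty)
    (hint : ∀ I ∈ C, IsIntervalS I)
    (hps : ∀ I ∈ C, ∀ J ∈ C, I ⊆ J → SetIsPrefixOf I J ∨ SetIsSuffixOf I J)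
    {I J : Set L} (hI : I ∈ C) (hJ : J ∈ C) (hIJ : I ≠ J) :
    IntLt I J ∨ IntLt J I := by
  by_cases hsub : I ⊆ J
  · obtain ⟨y, hyJ, hyI⟩ : ∃ y, y ∈ J ∧ y ∉ I := by
      by_contra h
      push_neg at h
      exact hIJ (Set.Subset.antisymm hsub h)
    rcases hps I hI J hJ hsub with h | h
    · exact Or.inl (Or.inr ⟨y, hyJ, fun a ha => h a ha y ⟨hyJ, hyI⟩⟩)
    · exact Or.inr (Or.inl ⟨y, hyJ, fun a ha => h y ⟨hyJ, hyI⟩ a ha⟩)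
  · by_cases hsub' : J ⊆ I
    · obtain ⟨a, haI, haJ⟩ : ∃ a, a ∈ I ∧ a ∉ J := by
        by_contra h
        push_neg at h
        exact hIJ (Set.Subset.antisymm h hsub')
      rcases hps J hJ I hI hsub' with h | h
      · exact Or.inr (Or.inr ⟨a, haI, fun b hb => h b hb a ⟨haI, haJ⟩⟩)
      · exact Or.inl (Or.inl ⟨a, haI, fun b hb => h a ⟨haI, haJ⟩ b hb⟩)
    · obtain ⟨a, haI, haJ⟩ := Set.not_subset.mp hsub
      obtain ⟨b, hbJ, hbI⟩ := Set.not_subset.mp hsub'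
      rcases lt_trichotomy a b with hab | hab | hab
      · refine Or.inl (Or.inl ⟨a, haI, fun c hc => ?_⟩)
        by_contra h
        push_neg at h
        rcases h.lt_or_eq with h' | h'
        · exact haJ (hint J hJ c hc b hbJ a h' hab)
        · exact haJ (h' ▸ hc)
      · exact absurd (hab ▸ hbJ) haJ
      · refine Or.inr (Or.inl ⟨b, hbJ, fun c hc => ?_⟩)
        by_contra h
        push_neg at h
        rcases h.lt_or_eq with h' | h'
        · exact hbI (hint I hI c hc a haI b h' hab)
        · exact hbI (h' ▸ hc)

/-- Transitivity of `IntLt` on a prefix/suffix family. -/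
lemma intlt_trans {L : Type*} [LinearOrder L] (C : Set (Set L))
    (hne : ∀ I ∈ C, I.Nonempty)
    (hint : ∀ I ∈ C, IsIntervalS I)
    (hps : ∀ I ∈ C, ∀ J ∈ C, I ⊆ J → SetIsPrefixOf I J ∨ SetIsSuffixOf I J)
    {I J K : Set L} (hI : I ∈ C) (hJ : J ∈ C) (hK : K ∈ C)
    (h₁ : IntLt I J) (h₂ : IntLt J K) : IntLt I K := by
  rcases h₁ with ⟨x, hxI, hx⟩ | ⟨z, hzJ, hz⟩
  · rcases h₂ with ⟨x', hx'J, hx'⟩ | ⟨z, hzK, hz⟩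
    · -- x ∈ I below all J, x' ∈ J below all K
      exact Or.inl ⟨x, hxI, fun c hc => (hx x' hx'J).trans (hx' c hc)⟩
    · -- x ∈ I below all J, z ∈ K above all J
      refine Or.inr ⟨z, hzK, fun a ha => ?_⟩
      by_contra h
      push_neg at h
      have hzI : z ∉ I := fun h' =>
        intlt_aux C hne hint hps hI hJ hxI hx h' hz
      rcases h.lt_or_eq with h' | h'
      · obtain ⟨w, hw⟩ := hne J hJ
        exact hzI (hint I hI x hxI a ha z ((hx w hw).trans (hz w hw)) h')
      · exact hzI (h' ▸ ha)
  · rcases h₂ with ⟨x, hxJ, hx⟩ | ⟨z', hz'K, hz'⟩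
    · -- z ∈ J above all I, x ∈ J below all K
      by_cases hIK : I = K
      · subst hIK
        exact absurd (intlt_aux C hne hint hps hJ hI hxJ hx hzJ hz) id
      · rcases intlt_total C hne hint hps hI hK hIK with h | h
        · exact h
        · exfalso
          rcases h with ⟨k, hkK, hk⟩ | ⟨a, haI, ha⟩
          · -- k ∈ K below all I : then x ∈ J is below all I
            exact intlt_aux C hne hint hps hJ hI hxJ
              (fun c hc => (hx k hkK).trans (hk c hc)) hzJ hz
          · -- a ∈ I above all K : then K ⊆ J, use prefix/suffix
            have hxK : x ∉ K := fun h' => lt_irrefl x (hx x h')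
            have hzK : z ∉ K := fun h' => lt_asymm (ha z h') (hz a haI)
            have hKJ : K ⊆ J := fun k hk =>
              hint J hJ x hxJ z hzJ k (hx k hk) ((ha k hk).trans (hz a haI))
            obtain ⟨k₀, hk₀⟩ := hne K hK
            rcases hps K hK J hJ hKJ with h' | h'
            · exact absurd (hx k₀ hk₀) (not_lt_of_gt (h' k₀ hk₀ x ⟨hxJ, hxK⟩))
            · exact absurd ((ha k₀ hk₀).trans (hz a haI))
                (not_lt_of_gt (h' z ⟨hzJ, hzK⟩ k₀ hk₀))
    · -- z ∈ J above all I, z' ∈ K above all J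
      exact Or.inr ⟨z', hz'K, fun a ha => (hz a ha).trans (hz' z hzJ)⟩

/-- On a prefix/suffix family of non-empty intervals, `<ⁱ` is a strict linear order:
irreflexive, asymmetric, transitive, and total on distinct members. -/
theorem stmt2 {L : Type*} [LinearOrder L] (C : Set (Set L))
    (hne : ∀ I ∈ C, I.Nonempty)
    (hint : ∀ I ∈ C, IsIntervalS I)
    (hps : ∀ I ∈ C, ∀ J ∈ C, I ⊆ J → SetIsPrefixOf I J ∨ SetIsSuffixOf I J) :
    (∀ I ∈ C, ¬ IntLt I I) ∧
    (∀ I ∈ C, ∀ J ∈ C, IntLt I J → ¬ IntLt J I) ∧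
    (∀ I ∈ C, ∀ J ∈ C, ∀ K ∈ C, IntLt I J → IntLt J K → IntLt I K) ∧
    (∀ I ∈ C, ∀ J ∈ C, I ≠ J → IntLt I J ∨ IntLt J I) := by
  have hirr : ∀ I ∈ C, ¬ IntLt I I := by
    rintro I _ (⟨x, hx, h⟩ | ⟨x, hx, h⟩) <;> exact lt_irrefl x (h x hx)
  refine ⟨hirr, ?_, ?_, ?_⟩
  · intro I hI J hJ h₁ h₂
    exact hirr I hI (intlt_trans C hne hint hps hI hJ hI h₁ h₂)
  · intro I hI J hJ K hK h₁ h₂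
    exact intlt_trans C hne hint hps hI hJ hK h₁ h₂
  · intro I hI J hJ hIJ
    exact intlt_total C hne hint hps hI hJ hIJ
end

section
/- Let C be a family of non-empty intervals of a finite linear order (L,<) satisfying the prefix/suffix property. Then for I, J ∈ C with I ≠ J, I <ⁱ J if and only if (min I < min J) or (min I = min J and max I < max J). -/
/-- The interval order `<ⁱ` on finsets. -/
def IntLtF {L : Type*} [LinearOrder L] (I J : Finset L) : Prop :=
  (∃ x ∈ I, ∀ y ∈ J, x < y) ∨ (∃ y ∈ J, ∀ x ∈ I, x < y)

/-- On a prefix/suffix family of non-empty intervals of a finite linear order, for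
distinct members `I ≠ J`: `I <ⁱ J` iff `min I < min J`, or `min I = min J` and
`max I < max J`. -/
theorem stmt3 {L : Type*} [LinearOrder L] [Fintype L] (C : Finset (Finset L))
    (hne : ∀ I ∈ C, I.Nonempty)
    (hint : ∀ I ∈ C, IsIntervalF I)
    (hps : ∀ I ∈ C, ∀ J ∈ C, I ⊆ J → IsPrefixOf I J ∨ IsSuffixOf I J)
    (I : Finset L) (hI : I ∈ C) (J : Finset L) (hJ : J ∈ C) (hIJ : I ≠ J) :
    IntLtF I J ↔
      (I.min' (hne I hI) < J.min' (hne J hJ) ∨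
        (I.min' (hne I hI) = J.min' (hne J hJ) ∧
          I.max' (hne I hI) < J.max' (hne J hJ))) := by
  have h1 : IntLtF I J ↔
      (I.min' (hne I hI) < J.min' (hne J hJ) ∨ I.max' (hne I hI) < J.max' (hne J hJ)) := by
    constructor
    · rintro (⟨x, hx, h⟩ | ⟨y, hy, h⟩)
      · exact Or.inl (lt_of_le_of_lt (Finset.min'_le I x hx) (h _ (Finset.min'_mem J _)))
      · exact Or.inr (lt_of_lt_of_le (h _ (Finset.max'_mem I _)) (Finset.le_max' J y hy))
    · rintro (h | h)
      · exact Or.inl ⟨_, Finset.min'_mem I _, fun y hy => lt_of_lt_of_le h (Finset.min'_le J y hy)⟩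
      · exact Or.inr ⟨_, Finset.max'_mem J _, fun x hx => lt_of_le_of_lt (Finset.le_max' I x hx) h⟩
  rw [h1]
  constructor
  · rintro (h | hM)
    · exact Or.inl h
    · rcases lt_trichotomy (I.min' (hne I hI)) (J.min' (hne J hJ)) with h | h | h
      · exact Or.inl h
      · exact Or.inr ⟨h, hM⟩
      · exfalso
        have hsub : I ⊆ J := by
          intro x hx
          exact hint J hJ _ (Finset.min'_mem J _) _ (Finset.max'_mem J _) x
            (lt_of_lt_of_le h (Finset.min'_le I x hx))
            (lt_of_le_of_lt (Finset.le_max' I x hx) hM)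
        rcases hps I hI J hJ hsub with hp | hs
        · have hmJ : J.min' (hne J hJ) ∈ J \ I := by
            rw [Finset.mem_sdiff]
            exact ⟨Finset.min'_mem J _, fun hc => absurd (Finset.min'_le I _ hc) (not_le.2 h)⟩
          exact absurd (hp _ (Finset.min'_mem I _) _ hmJ) (not_lt.2 h.le)
        · have hMJ : J.max' (hne J hJ) ∈ J \ I := by
            rw [Finset.mem_sdiff]
            exact ⟨Finset.max'_mem J _, fun hc => absurd (Finset.le_max' I _ hc) (not_le.2 hM)⟩
          exact absurd (hs _ hMJ _ (Finset.max'_mem I _)) (not_lt.2 hM.le)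
  · rintro (h | ⟨_, h⟩)
    exacts [Or.inl h, Or.inr h]
end

section
/- Let A be a Wheeler NFA with Wheeler order < on its states, let u, v be states and α, β strings in Pref(L(A)) such that α labels a path from the start state s to u, β labels a path from s to v, and not both α and β label paths to both u and v. Then α ≺ β (co-lexicographically) if and only if u < v. -/
variable {V : Type*} {A : Type*}

/-- `Reaches E s α v`: the string `α` labels a path in the labeled graph `E`
from the state `s` to the state `v`. -/
inductive Reaches (E : V → A → V → Prop) (s : V) : List A → V → Prop
  | nil : Reaches E s [] s
  | snoc {α : List A} {u w : V} {a : A} :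
      Reaches E s α u → E u a w → Reaches E s (α ++ [a]) w

/-- Co-lexicographic (strict) order on strings: lexicographic order of reverses. -/
def ColexLt [LinearOrder A] (α β : List A) : Prop :=
  List.Lex (· < ·) α.reverse β.reverse

/-- `r` is a strict total order. -/
def StrictTotal (r : V → V → Prop) : Prop :=
  (∀ x, ¬ r x x) ∧ (∀ x y z, r x y → r y z → r x z) ∧
  (∀ x y : V, x ≠ y → r x y ∨ r y x)

/-- `r` is a Wheeler order for the labeled graph `E`: a strict total order on states
such that in-degree-0 states precede all states with positive in-degree, edges with
strictly smaller labels point to strictly smaller states, and equally-labeled edges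
from ordered sources point to weakly ordered targets. -/
def WheelerRel [LinearOrder A] (E : V → A → V → Prop) (r : V → V → Prop) : Prop :=
  StrictTotal r ∧
  (∀ x w : V, (∀ u a, ¬ E u a x) → (∃ u a, E u a w) → r x w) ∧
  (∀ u₁ a₁ v₁ u₂ a₂ v₂, E u₁ a₁ v₁ → E u₂ a₂ v₂ → a₁ < a₂ → r v₁ v₂) ∧
  (∀ u₁ v₁ u₂ v₂ a, E u₁ a v₁ → E u₂ a v₂ → r u₁ u₂ → r v₁ v₂ ∨ v₁ = v₂)

/-- The language accepted by the automaton `(V, E, F, s)`. -/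
def Lang (E : V → A → V → Prop) (F : Set V) (s : V) : Set (List A) :=
  {α | ∃ w ∈ F, Reaches E s α w}

/-- `Pref(L(A))`: the set of prefixes of accepted strings. -/
def PrefL (E : V → A → V → Prop) (F : Set V) (s : V) : Set (List A) :=
  {α | ∃ β, α ++ β ∈ Lang E F s}

/-- `I_u`: the strings in `Pref(L(A))` labeling a path from `s` to `u`. -/
def Iset (E : V → A → V → Prop) (F : Set V) (s u : V) : Set (List A) :=
  {α | α ∈ PrefL E F s ∧ Reaches E s α u}

/-- `I_α`: the set of states reached from `s` by a path labeled `α`. -/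
def Istr (E : V → A → V → Prop) (s : V) (α : List A) : Set V :=
  {w | Reaches E s α w}

/-
For `α ≺ β → u < v`, induct on the path labelled `β` and compare the last letters of `α` and `β`.
If they differ, axiom (i) gives `u < v` directly; if they agree, the induction hypothesis orders the
predecessors, and axiom (ii) orders `u, v` weakly, strictly because `u = v` would make `α, β` both
reach both states. An empty `α` reaches only the source `s`, which precedes every state with an
incoming edge. The converse follows since `≺` is total and `<` is asymmetric.
-/

namespace Reaches

variable {E : V → A → V → Prop} {s : V}

lemma eq_of_nil {u : V} (h : Reaches E s [] u) : u = s := by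
  generalize hγ : ([] : List A) = γ at h
  cases h with
  | nil => rfl
  | snoc => simp at hγ

lemma exists_of_append_singleton {w : V} {α : List A} {a : A} (h : Reaches E s (α ++ [a]) w) :
    ∃ u, Reaches E s α u ∧ E u a w := by
  generalize hγ : α ++ [a] = γ at h
  cases h with
  | nil => simp at hγ
  | snoc hα he =>
    obtain ⟨rfl, rfl⟩ := List.append_inj' hγ rfl |>.imp_right (List.cons.inj · |>.1)
    exact ⟨_, hα, he⟩

end Reaches

section ColexLt

variable [LinearOrder A]

lemma not_colexLt_nil (α : List A) : ¬ ColexLt α [] :=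
  List.not_lex_nil

lemma colexLt_append_singleton_iff {α β : List A} {a b : A} :
    ColexLt (α ++ [a]) (β ++ [b]) ↔ a < b ∨ a = b ∧ ColexLt α β := by
  simp only [ColexLt, List.reverse_append, List.reverse_singleton, List.singleton_append]
  exact List.cons_lex_cons_iff

lemma colexLt_or_colexLt_of_ne {α β : List A} (h : α ≠ β) : ColexLt α β ∨ ColexLt β α :=
  lt_or_gt_of_ne (mt List.reverse_inj.mp h)

end ColexLt

namespace WheelerRel

variable [LinearOrder A] {E : V → A → V → Prop} {r : V → V → Prop}

lemma asymm (hW : WheelerRel E r) {u v : V} (huv : r u v) : ¬ r v u :=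
  fun hvu => hW.1.1 u (hW.1.2.1 _ _ _ huv hvu)

theorem rel_of_colexLt (hW : WheelerRel E r) {s : V} (hsrc : ∀ u a, ¬ E u a s)
    {α β : List A} {u v : V} (hαu : Reaches E s α u) (hβv : Reaches E s β v)
    (hlt : ColexLt α β) (hsep : ¬ (Reaches E s α v ∧ Reaches E s β u)) : r u v := by
  induction hβv generalizing α u with
  | nil => exact absurd hlt (not_colexLt_nil α)
  | @snoc β v' v b hβv' hev ih =>
    rcases α.eq_nil_or_concat' with rfl | ⟨α', a, rfl⟩
    · rw [hαu.eq_of_nil]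
      exact hW.2.1 _ _ hsrc ⟨_, _, hev⟩
    obtain ⟨u', hαu', heu⟩ := hαu.exists_of_append_singleton
    rcases colexLt_append_singleton_iff.mp hlt with hab | ⟨rfl, hlt'⟩
    · exact hW.2.2.1 _ _ _ _ _ _ heu hev hab
    have hr : r u' v' := ih hαu' hlt' fun ⟨hαv, hβu⟩ => hsep ⟨hαv.snoc hev, hβu.snoc heu⟩
    refine (hW.2.2.2 _ _ _ _ _ heu hev hr).resolve_right ?_
    rintro rfl
    exact hsep ⟨hαu, hβv'.snoc hev⟩

end WheelerRel

theorem stmt4_general {V A : Type*} [LinearOrder A]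
    (E : V → A → V → Prop) (F : Set V) (s : V) (r : V → V → Prop)
    (hsrc : ∀ u a, ¬ E u a s)
    (hW : WheelerRel E r)
    (u v : V) (α β : List A)
    (hα : α ∈ Iset E F s u) (hβ : β ∈ Iset E F s v)
    (hnot : ¬ ({α, β} : Set (List A)) ⊆ Iset E F s u ∩ Iset E F s v) :
    ColexLt α β ↔ r u v := by
  obtain ⟨hαP, hαu⟩ := hα
  obtain ⟨hβP, hβv⟩ := hβ
  have hsep : ¬ (Reaches E s α v ∧ Reaches E s β u) := fun ⟨hαv, hβu⟩ =>
    hnot <| Set.insert_subset_iff.2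
      ⟨⟨⟨hαP, hαu⟩, hαP, hαv⟩, Set.singleton_subset_iff.2 ⟨⟨hβP, hβu⟩, hβP, hβv⟩⟩
  refine ⟨(hW.rel_of_colexLt hsrc hαu hβv · hsep), fun huv => ?_⟩
  have hne : α ≠ β := by
    rintro rfl
    exact hsep ⟨hβv, hαu⟩
  refine (colexLt_or_colexLt_of_ne hne).resolve_right fun hgt => hW.asymm huv ?_
  exact hW.rel_of_colexLt hsrc hβv hαu hgt fun ⟨hβu, hαv⟩ => hsep ⟨hαv, hβu⟩

/-- For a Wheeler NFA with Wheeler order `r`, states `u, v`, and strings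
`α ∈ I_u`, `β ∈ I_v` with not both `α, β ∈ I_u ∩ I_v`:
`α ≺ β` co-lexicographically iff `u` precedes `v` in the Wheeler order. -/
theorem stmt4 {V A : Type*} [LinearOrder A]
    (E : V → A → V → Prop) (F : Set V) (s : V) (r : V → V → Prop)
    (hsrc : ∀ u a, ¬ E u a s)
    (hsuniq : ∀ x : V, (∀ u a, ¬ E u a x) → x = s)
    (hreach : ∀ x : V, ∃ α, Reaches E s α x)
    (hW : WheelerRel E r)
    (u v : V) (α β : List A)
    (hα : α ∈ Iset E F s u) (hβ : β ∈ Iset E F s v)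
    (hnot : ¬ ({α, β} : Set (List A)) ⊆ Iset E F s u ∩ Iset E F s v) :
    ColexLt α β ↔ r u v :=
  stmt4_general E F s r hsrc hW u v α β hα hβ hnot
end

section
/- Let A be a Wheeler DFA with Wheeler order <. For any two distinct states u and v: u < v if and only if for every string α_u labeling a path from the start state s to u and every string α_v labeling a path from s to v, α_u ≺ α_v co-lexicographically. Consequently, the Wheeler order on a Wheeler DFA is unique. -/
variable {V : Type*} {A : Type*}

section Aux

variable {V A : Type*} [LinearOrder A] {E : V → A → V → Prop} {s : V}

lemma reaches_nil_inv {x : V} (h : Reaches E s [] x) : x = s := by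
  have : ∀ l, Reaches E s l x → l = [] → x = s := by
    intro l h
    cases h with
    | nil => intro; rfl
    | snoc h' he => intro heq; simp at heq
  exact this [] h rfl

lemma reaches_snoc_inv {l : List A} {a : A} {x : V}
    (h : Reaches E s (l ++ [a]) x) : ∃ u, Reaches E s l u ∧ E u a x := by
  have : ∀ m, Reaches E s m x → m = l ++ [a] → ∃ u, Reaches E s l u ∧ E u a x := by
    intro m h
    cases h with
    | nil => intro heq; exact absurd heq.symm (by simp)
    | snoc h' he =>
      intro heq
      obtain ⟨h1, h2⟩ := List.append_inj' heq rfl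
      obtain rfl : a = _ := by simpa using h2.symm
      subst h1
      exact ⟨_, h', he⟩
  exact this _ h rfl

lemma reaches_det (hdet : ∀ u a v v', E u a v → E u a v' → v = v')
    {α : List A} {x y : V} (hx : Reaches E s α x) (hy : Reaches E s α y) :
    x = y := by
  induction hx generalizing y with
  | nil => exact (reaches_nil_inv hy).symm
  | snoc h he ih =>
    obtain ⟨u', hu', he'⟩ := reaches_snoc_inv hy
    obtain rfl := ih hu'
    exact hdet _ _ _ _ he he'

lemma wheeler_key {r : V → V → Prop}
    (hdet : ∀ u a v v', E u a v → E u a v' → v = v')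
    (hsrc : ∀ u a, ¬ E u a s) (hW : WheelerRel E r)
    {ra rb : List A} (h : List.Lex (· < ·) ra rb) :
    ∀ {x y : V}, Reaches E s ra.reverse x → Reaches E s rb.reverse y →
      r x y ∨ x = y := by
  obtain ⟨hsto, h2, h3, h4⟩ := hW
  induction h with
  | nil =>
    intro x y hx hy
    obtain rfl := reaches_nil_inv hx
    rw [List.reverse_cons] at hy
    obtain ⟨u, _, he⟩ := reaches_snoc_inv hy
    exact Or.inl (h2 _ _ hsrc ⟨u, _, he⟩)
  | @rel a l1 b l2 hab =>
    intro x y hx hy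
    rw [List.reverse_cons] at hx hy
    obtain ⟨u, _, heu⟩ := reaches_snoc_inv hx
    obtain ⟨v, _, hev⟩ := reaches_snoc_inv hy
    exact Or.inl (h3 _ _ _ _ _ _ heu hev hab)
  | @cons a l1 l2 hlex ih =>
    intro x y hx hy
    rw [List.reverse_cons] at hx hy
    obtain ⟨u, hu, heu⟩ := reaches_snoc_inv hx
    obtain ⟨v, hv, hev⟩ := reaches_snoc_inv hy
    rcases ih hu hv with h | rfl
    · exact h4 _ _ _ _ _ heu hev h
    · exact Or.inr (hdet _ _ _ _ heu hev)

lemma wheeler_forward {r : V → V → Prop}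
    (hdet : ∀ u a v v', E u a v → E u a v' → v = v')
    (hsrc : ∀ u a, ¬ E u a s) (hW : WheelerRel E r)
    {u v : V} (huv : u ≠ v) (hr : r u v) :
    ∀ αu αv : List A, Reaches E s αu u → Reaches E s αv v → ColexLt αu αv := by
  intro αu αv hu hv
  rcases trichotomous_of (List.Lex ((· < ·) : A → A → Prop))
      αu.reverse αv.reverse with h | h | h
  · exact h
  · exact absurd (reaches_det hdet (by simpa [List.reverse_injective h] using hu) hv) huv
  · rcases wheeler_key hdet hsrc hW h (by simpa using hv) (by simpa using hu) with h' | h'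
    · exact absurd (hW.1.2.1 _ _ _ hr h') (hW.1.1 u)
    · exact absurd h'.symm huv

lemma wheeler_iff {r : V → V → Prop}
    (hdet : ∀ u a v v', E u a v → E u a v' → v = v')
    (hsrc : ∀ u a, ¬ E u a s)
    (hreach : ∀ x : V, ∃ α, Reaches E s α x) (hW : WheelerRel E r)
    {u v : V} (huv : u ≠ v) :
    r u v ↔ ∀ αu αv : List A,
      Reaches E s αu u → Reaches E s αv v → ColexLt αu αv := by
  constructor
  · exact wheeler_forward hdet hsrc hW huv
  · intro h
    rcases hW.1.2.2 u v huv with h' | h'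
    · exact h'
    · exfalso
      obtain ⟨αu, hαu⟩ := hreach u
      obtain ⟨αv, hαv⟩ := hreach v
      have c1 : ColexLt αu αv := h αu αv hαu hαv
      have c2 : ColexLt αv αu :=
        wheeler_forward hdet hsrc hW (Ne.symm huv) h' αv αu hαv hαu
      exact asymm_of (List.Lex ((· < ·) : A → A → Prop)) c1 c2

end Aux

/-- For a Wheeler DFA with Wheeler order `r` and distinct states `u, v`:
`r u v` iff every string labeling a path `s ⇝ u` is co-lexicographically smaller
than every string labeling a path `s ⇝ v`. Consequently the Wheeler order of a
Wheeler DFA is unique. -/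
theorem stmt5 {V A : Type*} [LinearOrder A]
    (E : V → A → V → Prop) (F : Set V) (s : V) (r : V → V → Prop)
    (hdet : ∀ u a v v', E u a v → E u a v' → v = v')
    (hsrc : ∀ u a, ¬ E u a s)
    (hsuniq : ∀ x : V, (∀ u a, ¬ E u a x) → x = s)
    (hreach : ∀ x : V, ∃ α, Reaches E s α x)
    (hW : WheelerRel E r) :
    (∀ u v : V, u ≠ v →
      (r u v ↔ ∀ αu αv : List A,
        Reaches E s αu u → Reaches E s αv v → ColexLt αu αv)) ∧
    (∀ r' : V → V → Prop, WheelerRel E r' → ∀ x y, r' x y ↔ r x y) := by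
  refine ⟨fun u v huv => wheeler_iff hdet hsrc hreach hW huv, ?_⟩
  intro r' hW' x y
  by_cases hxy : x = y
  · subst hxy
    exact ⟨fun h => absurd h (hW'.1.1 x), fun h => absurd h (hW.1.1 x)⟩
  · exact (wheeler_iff hdet hsrc hreach hW' hxy).trans
      (wheeler_iff hdet hsrc hreach hW hxy).symm
end

section
/- Let A be a Wheeler NFA. For every state u of A, the set I_u of strings in Pref(L(A)) labeling some path from the start state to u is an interval (convex set) of (Pref(L(A)), ≺), where ≺ is the co-lexicographic order. -/
variable {V : Type*} {A : Type*}

/-- A prefix of a string labeling a path from `s` also labels a path from `s`. -/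
lemma reaches_of_append {E : V → A → V → Prop} {s : V} {γ : List A} {w : V}
    (h : Reaches E s γ w) : ∀ α δ : List A, γ = α ++ δ → ∃ x, Reaches E s α x := by
  induction h with
  | nil =>
    intro α δ hd
    obtain ⟨rfl, rfl⟩ := List.append_eq_nil_iff.mp hd.symm
    exact ⟨s, .nil⟩
  | @snoc σ p w a hp e ih =>
    intro α δ hd
    rcases δ.eq_nil_or_concat with rfl | ⟨δ', c, rfl⟩
    · rw [List.append_nil] at hd
      exact hd ▸ ⟨w, .snoc hp e⟩
    · rw [List.concat_eq_append, ← List.append_assoc] at hd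
      obtain ⟨h1, _⟩ := List.append_inj' hd (by simp)
      exact ih α δ' h1

/-- Key crossing lemma: if `σ ≺ τ`, `p ∈ I_σ`, `q ∈ I_τ` and `q` is strictly below
`p` in the Wheeler order, then also `p ∈ I_τ` and `q ∈ I_σ`. -/
lemma wheeler_cross [LinearOrder A] {E : V → A → V → Prop} {s : V} {r : V → V → Prop}
    (hsrc : ∀ u a, ¬ E u a s) (hW : WheelerRel E r) :
    ∀ (n : ℕ) (σ τ : List A) (p q : V), σ.length = n →
      Reaches E s σ p → Reaches E s τ q → ColexLt σ τ → r q p →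
      Reaches E s τ p ∧ Reaches E s σ q := by
  obtain ⟨⟨hirr, htrans, htot⟩, h2, h3, h4⟩ := hW
  intro n
  induction n with
  | zero =>
    intro σ τ p q hlen hp hq _ hqp
    cases hp with
    | nil =>
      cases hq with
      | nil => exact absurd hqp (hirr s)
      | snoc hq' e =>
        have hsq : r s _ := h2 s _ (fun u a => hsrc u a) ⟨_, _, e⟩
        exact absurd (htrans _ _ _ hqp hsq) (hirr _)
    | snoc hp' e => simp at hlen
  | succ n ih =>
    intro σ τ p q hlen hp hq hlex hqp
    cases hp with
    | nil => simp at hlen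
    | @snoc σ' p' _ a hp' e₁ =>
      cases hq with
      | nil =>
        exfalso
        have hlex2 : List.Lex (· < ·) (a :: σ'.reverse) ([] : List A) := by
          simpa [ColexLt] using hlex
        cases hlex2
      | @snoc τ' q' _ b hq' e₂ =>
        have hlex' : List.Lex (· < ·) (a :: σ'.reverse) (b :: τ'.reverse) := by
          simpa [ColexLt] using hlex
        cases hlex' with
        | rel hab =>
          exact absurd (htrans _ _ _ hqp (h3 _ _ _ _ _ _ e₁ e₂ hab)) (hirr _)
        | cons hl' =>
          have hnp : ¬ r p' q' := by
            intro h
            rcases h4 _ _ _ _ _ e₁ e₂ h with h' | rfl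
            · exact hirr _ (htrans _ _ _ hqp h')
            · exact hirr _ hqp
          rcases eq_or_ne p' q' with rfl | hne
          · exact ⟨.snoc hq' e₁, .snoc hp' e₂⟩
          · have hq'p' : r q' p' := ((htot q' p' (Ne.symm hne)).resolve_right hnp)
            have hlen' : σ'.length = n := by simpa using hlen
            obtain ⟨H1, H2⟩ := ih σ' τ' p' q' hlen' hp' hq' hl' hq'p'
            exact ⟨.snoc H1 e₁, .snoc H2 e₂⟩

/-- In a Wheeler NFA, for every state `u` the set `I_u` of strings in `Pref(L(A))`
labeling a path from the start state to `u` is an interval (convex set) of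
`(Pref(L(A)), ≺)` under the co-lexicographic order. -/
theorem stmt6 {V A : Type*} [LinearOrder A]
    (E : V → A → V → Prop) (F : Set V) (s : V) (r : V → V → Prop)
    (hsrc : ∀ u a, ¬ E u a s)
    (hsuniq : ∀ x : V, (∀ u a, ¬ E u a x) → x = s)
    (hreach : ∀ x : V, ∃ α, Reaches E s α x)
    (hW : WheelerRel E r) (u : V) :
    ∀ α ∈ Iset E F s u, ∀ γ ∈ Iset E F s u, ∀ β ∈ PrefL E F s,
      ColexLt α β → ColexLt β γ → β ∈ Iset E F s u := by
  intro α hα γ hγ β hβ hab hbc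
  obtain ⟨hαP, hαR⟩ := hα
  obtain ⟨hγP, hγR⟩ := hγ
  refine ⟨hβ, ?_⟩
  obtain ⟨δ, w, hwF, hr⟩ := hβ
  obtain ⟨x, hx⟩ := reaches_of_append hr β δ rfl
  rcases eq_or_ne x u with rfl | hne
  · exact hx
  · rcases hW.1.2.2 x u hne with hxu | hux
    · exact (wheeler_cross hsrc hW α.length α β u x rfl hαR hx hab hxu).1
    · exact (wheeler_cross hsrc hW β.length β γ x u rfl hx hγR hbc hux).2
end

section
/- Let A be a Wheeler NFA. The family {I_u : u a state of A} of sets of strings (where I_u is the set of prefixes of L(A) labeling a path from the start state to u) is a prefix/suffix family of intervals of (Pref(L(A)), ≺): each I_u is a convex set, and whenever I_u ⊆ I_v, I_u is either an initial segment or a final segment of I_v. -/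
variable {V : Type*} {A : Type*}

section Aux

variable {V A : Type*}

lemma reaches_inv {E : V → A → V → Prop} {s : V} {δ : List A} {u : V}
    (h : Reaches E s δ u) :
    (δ = [] → u = s) ∧ ∀ γ a, δ = γ ++ [a] → ∃ u', Reaches E s γ u' ∧ E u' a u := by
  cases h with
  | nil =>
    refine ⟨fun _ => rfl, fun γ a hEq => ?_⟩
    exact absurd hEq (by simp)
  | @snoc α u' w a h' e =>
    refine ⟨by simp, fun γ b hEq => ?_⟩
    obtain ⟨rfl, h2⟩ := List.append_inj' hEq rfl
    obtain rfl : a = b := by simpa using h2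
    exact ⟨u', h', e⟩

lemma reaches_prefix {E : V → A → V → Prop} {s : V} :
    ∀ (δ γ : List A) (x : V), Reaches E s (γ ++ δ) x → ∃ w, Reaches E s γ w := by
  intro δ
  induction δ using List.reverseRecOn with
  | nil => intro γ x h; exact ⟨x, by simpa using h⟩
  | append_singleton δ' a ih =>
    intro γ x h
    rw [← List.append_assoc] at h
    obtain ⟨u', hu', _⟩ := (reaches_inv h).2 _ _ rfl
    exact ih γ u' hu'

lemma key_lemma [LinearOrder A] {E : V → A → V → Prop} {s : V} {r : V → V → Prop}
    (hsrc : ∀ u a, ¬ E u a s) (hW : WheelerRel E r) :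
    ∀ α β : List A, ColexLt α β → ∀ u v, Reaches E s α u → Reaches E s β v →
      r u v ∨ (Reaches E s β u ∧ Reaches E s α v) := by
  obtain ⟨_, hnosrc, hlt, heq⟩ := hW
  have main : ∀ σ τ : List A, List.Lex (· < ·) σ τ →
      ∀ u v, Reaches E s σ.reverse u → Reaches E s τ.reverse v →
      r u v ∨ (Reaches E s τ.reverse u ∧ Reaches E s σ.reverse v) := by
    intro σ τ hlex
    induction hlex with
    | @nil b l =>
      intro u v hu hv
      obtain rfl : u = s := (reaches_inv hu).1 (by simp)
      rw [List.reverse_cons] at hv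
      obtain ⟨v', _, ev⟩ := (reaches_inv hv).2 _ _ rfl
      exact Or.inl (hnosrc _ v hsrc ⟨v', b, ev⟩)
    | @rel a l₁ b l₂ hab =>
      intro u v hu hv
      rw [List.reverse_cons] at hu hv
      obtain ⟨u', _, eu⟩ := (reaches_inv hu).2 _ _ rfl
      obtain ⟨v', _, ev⟩ := (reaches_inv hv).2 _ _ rfl
      exact Or.inl (hlt u' a u v' b v eu ev hab)
    | @cons a l₁ l₂ h ih =>
      intro u v hu hv
      rw [List.reverse_cons] at hu hv
      obtain ⟨u', hu', eu⟩ := (reaches_inv hu).2 _ _ rfl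
      obtain ⟨v', hv', ev⟩ := (reaches_inv hv).2 _ _ rfl
      rcases ih u' v' hu' hv' with h' | ⟨h1, h2⟩
      · rcases heq u' u v' v a eu ev h' with h'' | rfl
        · exact Or.inl h''
        · exact Or.inr ⟨by rw [List.reverse_cons]; exact hv,
            by rw [List.reverse_cons]; exact hu⟩
      · refine Or.inr ⟨?_, ?_⟩ <;> rw [List.reverse_cons]
        · exact Reaches.snoc h1 eu
        · exact Reaches.snoc h2 ev
  intro α β h u v hu hv
  have := main α.reverse β.reverse h u v (by simpa) (by simpa)
  simpa using this

lemma colex_total [LinearOrder A] {α β : List A} (h : α ≠ β) :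
    ColexLt α β ∨ ColexLt β α := by
  have hne : α.reverse ≠ β.reverse := fun hc => h (by simpa using congrArg List.reverse hc)
  rcases trichotomous_of (List.Lex ((· < ·) : A → A → Prop)) α.reverse β.reverse with h' | h' | h'
  · exact Or.inl h'
  · exact absurd h' hne
  · exact Or.inr h'

end Aux

/-- In a Wheeler NFA, the family `{I_u : u ∈ V}` is a prefix/suffix family of
intervals of `(Pref(L(A)), ≺)`: each `I_u` is convex, and whenever `I_u ⊆ I_v`,
`I_u` is an initial or a final segment of `I_v`. -/
theorem stmt7 {V A : Type*} [LinearOrder A]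
    (E : V → A → V → Prop) (F : Set V) (s : V) (r : V → V → Prop)
    (hsrc : ∀ u a, ¬ E u a s)
    (hsuniq : ∀ x : V, (∀ u a, ¬ E u a x) → x = s)
    (hreach : ∀ x : V, ∃ α, Reaches E s α x)
    (hW : WheelerRel E r) :
    (∀ u : V, ∀ α ∈ Iset E F s u, ∀ γ ∈ Iset E F s u, ∀ β ∈ PrefL E F s,
      ColexLt α β → ColexLt β γ → β ∈ Iset E F s u) ∧
    (∀ u v : V, Iset E F s u ⊆ Iset E F s v →
      (∀ α ∈ Iset E F s u, ∀ β ∈ Iset E F s v \ Iset E F s u, ColexLt α β) ∨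
      (∀ β ∈ Iset E F s v \ Iset E F s u, ∀ α ∈ Iset E F s u, ColexLt β α)) := by
  have key := key_lemma hsrc hW
  obtain ⟨hirr, htrans, -⟩ := hW.1
  constructor
  · intro u α hα γ hγ β hβ hab hbg
    obtain ⟨δ, w0, -, hR⟩ := id hβ
    obtain ⟨w, hw⟩ := reaches_prefix δ β w0 hR
    rcases key α β hab u w hα.2 hw with h1 | ⟨h1, _⟩
    · rcases key β γ hbg w u hw hγ.2 with h2 | ⟨_, h2⟩
      · exact absurd (htrans u w u h1 h2) (hirr u)
      · exact ⟨hβ, h2⟩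
    · exact ⟨hβ, h1⟩
  · intro u v hsub
    by_contra hcon
    push_neg at hcon
    obtain ⟨⟨α, hα, β, hβ, hβα⟩, ⟨β', hβ', α', hα', hα'β'⟩⟩ := hcon
    have hβnu : ¬ Reaches E s β u := fun hc => hβ.2 ⟨hβ.1.1, hc⟩
    have hβ'nu : ¬ Reaches E s β' u := fun hc => hβ'.2 ⟨hβ'.1.1, hc⟩
    have hne1 : β ≠ α := fun hc => hβnu (hc ▸ hα.2)
    have hne2 : α' ≠ β' := fun hc => hβ'nu (hc ▸ hα'.2)
    have hba : ColexLt β α := (colex_total hne1).resolve_right (fun h => hβα h)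
    have hab' : ColexLt α' β' := (colex_total hne2).resolve_right (fun h => hα'β' h)
    rcases key β α hba v u hβ.1.2 hα.2 with h1 | ⟨_, h1⟩
    · rcases key α' β' hab' u v hα'.2 hβ'.1.2 with h2 | ⟨h2, _⟩
      · exact absurd (htrans u v u h2 h1) (hirr u)
      · exact hβ'nu h2
    · exact hβnu h1
end

section
/- Let A be a Wheeler NFA. Then the interval determinization A^d of A, ordered by the interval order <ⁱ, is itself a Wheeler DFA: the order <ⁱ on the states I_α of A^d satisfies the Wheeler axioms, and L(A^d) = L(A). -/
variable {V : Type*} {A : Type*}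

/-- States of the interval determinization: the sets `I_α` for `α ∈ Pref(L(A))`. -/
def DetStates (E : V → A → V → Prop) (F : Set V) (s : V) : Set (Set V) :=
  {S | ∃ α ∈ PrefL E F s, S = Istr E s α}

/-- Edges of the interval determinization: `(I_α, I_{αe}, e)` for `αe ∈ Pref(L(A))`. -/
def DetEdge (E : V → A → V → Prop) (F : Set V) (s : V) :
    Set V → A → Set V → Prop :=
  fun S e T => ∃ α, α ∈ PrefL E F s ∧ (α ++ [e]) ∈ PrefL E F s ∧
    S = Istr E s α ∧ T = Istr E s (α ++ [e])

/-- The interval order `<ⁱ` induced by a state order `r`. -/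
def IntvLt (r : V → V → Prop) (I J : Set V) : Prop :=
  (∃ x ∈ I, ∀ y ∈ J, r x y) ∨ (∃ y ∈ J, ∀ x ∈ I, r x y)


/-!
Everything rests on a crossing property of a Wheeler order `<`: if `α` precedes `β`
co-lexicographically, `u ∈ I_α`, `v ∈ I_β` and `v < u`, then also `v ∈ I_α` and `u ∈ I_β`.
This is seen by following both paths backwards: different last labels or ordered last
predecessors contradict the Wheeler axioms, and equal predecessors let the paths be exchanged.
Hence, for non-empty sets, `I_α <ⁱ I_β` holds exactly when `I_α ≠ I_β` and `α` precedes `β`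
co-lexicographically, so `<ⁱ` on the states of `A^d` is the co-lexicographic order transported
along `α ↦ I_α`, and the Wheeler axioms of `A^d` are inherited from those of `A`.
-/

section Paths

variable {E : V → A → V → Prop} {s : V}

@[simp]
lemma mem_istr {α : List A} {w : V} : w ∈ Istr E s α ↔ Reaches E s α w := Iff.rfl

lemma reaches_append_singleton_iff {α : List A} {a : A} {w : V} :
    Reaches E s (α ++ [a]) w ↔ ∃ u, Reaches E s α u ∧ E u a w := by
  refine ⟨fun h => ?_, fun ⟨u, hu, huw⟩ => hu.snoc huw⟩
  generalize hπ : α ++ [a] = π at h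
  cases h with
  | nil => simp at hπ
  | snoc hu huw =>
    obtain ⟨rfl, rfl⟩ := List.append_singleton_inj.mp hπ
    exact ⟨_, hu, huw⟩

lemma istr_append_singleton (α : List A) (a : A) :
    Istr E s (α ++ [a]) = {w | ∃ u ∈ Istr E s α, E u a w} := by
  ext w
  simp [reaches_append_singleton_iff]

lemma istr_nonempty_of_reaches_append {γ δ : List A} {w : V}
    (h : Reaches E s (γ ++ δ) w) : (Istr E s γ).Nonempty := by
  induction δ using List.reverseRecOn generalizing w with
  | nil => exact ⟨w, by simpa using h⟩
  | append_singleton δ a ih =>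
    rw [← List.append_assoc, reaches_append_singleton_iff] at h
    obtain ⟨u, hu, -⟩ := h
    exact ih hu

variable {F : Set V}

lemma istr_nonempty_of_mem_prefL {α : List A} (hα : α ∈ PrefL E F s) :
    (Istr E s α).Nonempty := by
  obtain ⟨β, w, -, hw⟩ := hα
  exact istr_nonempty_of_reaches_append hw

lemma mem_prefL_of_append_mem_prefL {α β : List A} (h : α ++ β ∈ PrefL E F s) :
    α ∈ PrefL E F s := by
  obtain ⟨γ, hγ⟩ := h
  exact ⟨β ++ γ, by rwa [← List.append_assoc]⟩

theorem detEdge_deterministic {S T T' : Set V} {e : A}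
    (h : DetEdge E F s S e T) (h' : DetEdge E F s S e T') : T = T' := by
  obtain ⟨α, -, -, rfl, rfl⟩ := h
  obtain ⟨α', -, -, hαα', rfl⟩ := h'
  rw [istr_append_singleton, hαα', ← istr_append_singleton]

theorem mem_prefL_and_istr_eq_iff_mem_lang {α : List A} :
    (α ∈ PrefL E F s ∧ ∃ β ∈ Lang E F s, Istr E s α = Istr E s β) ↔ α ∈ Lang E F s := by
  constructor
  · rintro ⟨-, β, ⟨w, hwF, hw⟩, hαβ⟩
    exact ⟨w, hwF, by rwa [← mem_istr, hαβ]⟩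
  · intro hα
    exact ⟨⟨[], by simpa using hα⟩, α, hα, rfl⟩

end Paths

section Colex

variable [LinearOrder A]

lemma colexLt_trichotomous (α β : List A) : α = β ∨ ColexLt α β ∨ ColexLt β α := by
  rcases lt_trichotomy α.reverse β.reverse with h | h | h
  · exact Or.inr (Or.inl h)
  · exact Or.inl (List.reverse_injective h)
  · exact Or.inr (Or.inr h)

lemma ColexLt.trans {α β γ : List A} (h₁ : ColexLt α β) (h₂ : ColexLt β γ) : ColexLt α γ :=
  lt_trans (α := List A) h₁ h₂

lemma ColexLt.append_singleton {α β : List A} (h : ColexLt α β) (a : A) :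
    ColexLt (α ++ [a]) (β ++ [a]) := by
  rw [ColexLt, List.reverse_concat', List.reverse_concat']
  exact List.Lex.cons h

end Colex

section IntervalOrder

variable {r : V → V → Prop}

lemma intvLt_irrefl (hirr : ∀ x, ¬ r x x) (S : Set V) : ¬ IntvLt r S S := by
  rintro (⟨x, hx, hS⟩ | ⟨x, hx, hS⟩) <;> exact hirr x (hS x hx)

variable [LinearOrder A] {E : V → A → V → Prop} {s : V}

theorem WheelerRel.reaches_swap_of_colexLt (hW : WheelerRel E r) (hsrc : ∀ u a, ¬ E u a s)
    {α β : List A} {u v : V} (hu : Reaches E s α u) (hv : Reaches E s β v)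
    (hαβ : ColexLt α β) (hvu : r v u) : Reaches E s α v ∧ Reaches E s β u := by
  obtain ⟨⟨hirr, htrans, htot⟩, hzero, hlabel, hsame⟩ := hW
  induction hv generalizing α u with
  | nil => exact absurd hαβ List.not_lex_nil
  | @snoc β v' v b hv' hb ih =>
    cases hu with
    | nil => exact absurd (htrans _ _ _ hvu (hzero s v hsrc ⟨v', b, hb⟩)) (hirr v)
    | @snoc α u' u a hu' ha =>
      rw [ColexLt, List.reverse_concat', List.reverse_concat'] at hαβ
      cases hαβ with
      | rel hab => exact absurd (htrans _ _ _ hvu (hlabel _ _ _ _ _ _ ha hb hab)) (hirr v)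
      | cons hαβ =>
        rcases eq_or_ne u' v' with rfl | hne
        · exact ⟨hu'.snoc hb, hv'.snoc ha⟩
        rcases htot u' v' hne with hu'v' | hv'u'
        · rcases hsame _ _ _ _ _ ha hb hu'v' with huv | rfl
          · exact absurd (htrans _ _ _ hvu huv) (hirr v)
          · exact ⟨hu'.snoc ha, hv'.snoc hb⟩
        · obtain ⟨hαv', hβu'⟩ := ih hu' hαβ hv'u'
          exact ⟨hαv'.snoc hb, hβu'.snoc ha⟩

variable {F : Set V}

theorem intvLt_of_detEdge_of_lt (hW : WheelerRel E r) {S₁ T₁ S₂ T₂ : Set V} {e₁ e₂ : A}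
    (h₁ : DetEdge E F s S₁ e₁ T₁) (h₂ : DetEdge E F s S₂ e₂ T₂) (he : e₁ < e₂) :
    IntvLt r T₁ T₂ := by
  obtain ⟨α₁, -, hα₁, -, rfl⟩ := h₁
  obtain ⟨α₂, -, -, -, rfl⟩ := h₂
  obtain ⟨x, hx⟩ := istr_nonempty_of_mem_prefL hα₁
  refine Or.inl ⟨x, hx, fun y hy => ?_⟩
  rw [istr_append_singleton] at hx hy
  obtain ⟨u, -, hux⟩ := hx
  obtain ⟨w, -, hwy⟩ := hy
  exact hW.2.2.1 _ _ _ _ _ _ hux hwy he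

variable (hW : WheelerRel E r) (hsrc : ∀ u a, ¬ E u a s)
include hW hsrc

theorem intvLt_istr_of_colexLt {α β : List A} (hαβ : ColexLt α β)
    (hne : Istr E s α ≠ Istr E s β) : IntvLt r (Istr E s α) (Istr E s β) := by
  have htot := hW.1.2.2
  by_cases hsub : Istr E s α ⊆ Istr E s β
  · obtain ⟨v, hv, hvα⟩ := Set.not_subset.mp fun h => hne (hsub.antisymm h)
    refine Or.inr ⟨v, hv, fun x hx => ?_⟩
    refine (htot x v (ne_of_mem_of_not_mem hx hvα)).resolve_right fun hvx => hvα ?_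
    exact (hW.reaches_swap_of_colexLt hsrc hx hv hαβ hvx).1
  · obtain ⟨u, hu, huβ⟩ := Set.not_subset.mp hsub
    refine Or.inl ⟨u, hu, fun y hy => ?_⟩
    refine (htot u y (ne_of_mem_of_not_mem hy huβ).symm).resolve_right fun hyu => huβ ?_
    exact (hW.reaches_swap_of_colexLt hsrc hu hy hαβ hyu).2

theorem not_intvLt_istr_of_colexLt {α β : List A} (hαβ : ColexLt α β)
    (hα : (Istr E s α).Nonempty) (hβ : (Istr E s β).Nonempty) :
    ¬ IntvLt r (Istr E s β) (Istr E s α) := by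
  have hirr := hW.1.1
  rintro (⟨x, hx, hxα⟩ | ⟨y, hy, hαy⟩)
  · obtain ⟨u, hu⟩ := hα
    exact hirr x (hxα x (hW.reaches_swap_of_colexLt hsrc hu hx hαβ (hxα u hu)).1)
  · obtain ⟨v, hv⟩ := hβ
    exact hirr y (hαy y (hW.reaches_swap_of_colexLt hsrc hy hv hαβ (hαy v hv)).2)

theorem colexLt_of_intvLt_istr {α β : List A}
    (hα : (Istr E s α).Nonempty) (hβ : (Istr E s β).Nonempty)
    (h : IntvLt r (Istr E s α) (Istr E s β)) : ColexLt α β := by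
  rcases colexLt_trichotomous α β with rfl | hαβ | hβα
  · exact absurd h (intvLt_irrefl hW.1.1 _)
  · exact hαβ
  · exact absurd h (not_intvLt_istr_of_colexLt hW hsrc hβα hβ hα)

theorem intvLt_istr_trans {α β γ : List A} (hα : (Istr E s α).Nonempty)
    (hβ : (Istr E s β).Nonempty) (hγ : (Istr E s γ).Nonempty)
    (h₁ : IntvLt r (Istr E s α) (Istr E s β)) (h₂ : IntvLt r (Istr E s β) (Istr E s γ)) :
    IntvLt r (Istr E s α) (Istr E s γ) := by
  have hβγ := colexLt_of_intvLt_istr hW hsrc hβ hγ h₂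
  refine intvLt_istr_of_colexLt hW hsrc
    ((colexLt_of_intvLt_istr hW hsrc hα hβ h₁).trans hβγ) fun hαγ => ?_
  rw [hαγ] at h₁
  exact not_intvLt_istr_of_colexLt hW hsrc hβγ hβ hγ h₁

theorem intvLt_istr_total {α β : List A} (hne : Istr E s α ≠ Istr E s β) :
    IntvLt r (Istr E s α) (Istr E s β) ∨ IntvLt r (Istr E s β) (Istr E s α) := by
  rcases colexLt_trichotomous α β with rfl | hαβ | hβα
  · exact absurd rfl hne
  · exact Or.inl (intvLt_istr_of_colexLt hW hsrc hαβ hne)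
  · exact Or.inr (intvLt_istr_of_colexLt hW hsrc hβα hne.symm)

theorem intvLt_of_no_detEdge_of_detEdge {α : List A} (hα : α ∈ PrefL E F s)
    (h₀ : ∀ S e, ¬ DetEdge E F s S e (Istr E s α)) {S T : Set V} {e : A}
    (hT : DetEdge E F s S e T) : IntvLt r (Istr E s α) T := by
  obtain rfl : α = [] := by
    rcases List.eq_nil_or_concat' α with hα' | ⟨α', a, rfl⟩
    · exact hα'
    · exact absurd ⟨α', mem_prefL_of_append_mem_prefL hα, hα, rfl, rfl⟩ (h₀ _ a)
  obtain ⟨β, -, -, -, rfl⟩ := hT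
  refine Or.inl ⟨s, Reaches.nil, fun y hy => ?_⟩
  rw [istr_append_singleton] at hy
  obtain ⟨u, -, hu⟩ := hy
  exact hW.2.1 s y hsrc ⟨u, e, hu⟩

theorem intvLt_or_eq_of_detEdge {S₁ T₁ S₂ T₂ : Set V} {e : A}
    (h₁ : DetEdge E F s S₁ e T₁) (h₂ : DetEdge E F s S₂ e T₂) (hS : IntvLt r S₁ S₂) :
    IntvLt r T₁ T₂ ∨ T₁ = T₂ := by
  obtain ⟨α₁, hα₁, -, rfl, rfl⟩ := h₁
  obtain ⟨α₂, hα₂, -, rfl, rfl⟩ := h₂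
  have hαα := colexLt_of_intvLt_istr hW hsrc
    (istr_nonempty_of_mem_prefL hα₁) (istr_nonempty_of_mem_prefL hα₂) hS
  rw [or_iff_not_imp_right]
  exact intvLt_istr_of_colexLt hW hsrc (hαα.append_singleton e)

end IntervalOrder

theorem stmt10_general {V A : Type*} [LinearOrder A]
    (E : V → A → V → Prop) (F : Set V) (s : V) (r : V → V → Prop)
    (hsrc : ∀ u a, ¬ E u a s)
    (hW : WheelerRel E r) :
    -- A^d is deterministic
    (∀ S e T T', DetEdge E F s S e T → DetEdge E F s S e T' → T = T') ∧
    -- <ⁱ is a strict total order on the states of A^d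
    (∀ S ∈ DetStates E F s, ¬ IntvLt r S S) ∧
    (∀ S ∈ DetStates E F s, ∀ T ∈ DetStates E F s, ∀ U ∈ DetStates E F s,
      IntvLt r S T → IntvLt r T U → IntvLt r S U) ∧
    (∀ S ∈ DetStates E F s, ∀ T ∈ DetStates E F s,
      S ≠ T → IntvLt r S T ∨ IntvLt r T S) ∧
    -- Wheeler axiom: in-degree-0 states of A^d precede states with in-degree > 0
    (∀ S ∈ DetStates E F s, ∀ T ∈ DetStates E F s,
      (∀ S' e, ¬ DetEdge E F s S' e S) → (∃ S' e, DetEdge E F s S' e T) →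
        IntvLt r S T) ∧
    -- Wheeler axiom: strictly smaller labels go to strictly smaller states
    (∀ S₁ e₁ T₁ S₂ e₂ T₂, DetEdge E F s S₁ e₁ T₁ → DetEdge E F s S₂ e₂ T₂ →
      e₁ < e₂ → IntvLt r T₁ T₂) ∧
    -- Wheeler axiom: equal labels from ordered sources go to weakly ordered targets
    (∀ S₁ T₁ S₂ T₂ e, DetEdge E F s S₁ e T₁ → DetEdge E F s S₂ e T₂ →
      IntvLt r S₁ S₂ → IntvLt r T₁ T₂ ∨ T₁ = T₂) ∧
    -- L(A^d) = L(A)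
    (∀ α : List A,
      (α ∈ PrefL E F s ∧ ∃ β ∈ Lang E F s, Istr E s α = Istr E s β) ↔
        α ∈ Lang E F s) := by
  refine ⟨fun _ _ _ _ => detEdge_deterministic, fun S _ => intvLt_irrefl hW.1.1 S,
    ?_, ?_, ?_, fun _ _ _ _ _ _ => intvLt_of_detEdge_of_lt hW,
    fun _ _ _ _ _ => intvLt_or_eq_of_detEdge hW hsrc,
    fun _ => mem_prefL_and_istr_eq_iff_mem_lang⟩
  · rintro _ ⟨α, hα, rfl⟩ _ ⟨β, hβ, rfl⟩ _ ⟨γ, hγ, rfl⟩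
    exact intvLt_istr_trans hW hsrc (istr_nonempty_of_mem_prefL hα)
      (istr_nonempty_of_mem_prefL hβ) (istr_nonempty_of_mem_prefL hγ)
  · rintro _ ⟨α, -, rfl⟩ _ ⟨β, -, rfl⟩
    exact intvLt_istr_total hW hsrc
  · rintro _ ⟨α, hα, rfl⟩ T - h₀ ⟨S', e, hT⟩
    exact intvLt_of_no_detEdge_of_detEdge hW hsrc hα h₀ hT

/-- The interval determinization `A^d` of a Wheeler NFA `A`, ordered by the interval
order `<ⁱ`, is itself a Wheeler DFA: `<ⁱ` is a strict total order on the states of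
`A^d` satisfying the Wheeler axioms, and `L(A^d) = L(A)`. -/
theorem stmt10 {V A : Type*} [LinearOrder A]
    (E : V → A → V → Prop) (F : Set V) (s : V) (r : V → V → Prop)
    (hsrc : ∀ u a, ¬ E u a s)
    (hsuniq : ∀ x : V, (∀ u a, ¬ E u a x) → x = s)
    (hreach : ∀ x : V, ∃ α, Reaches E s α x)
    (hW : WheelerRel E r) :
    -- A^d is deterministic
    (∀ S e T T', DetEdge E F s S e T → DetEdge E F s S e T' → T = T') ∧
    -- <ⁱ is a strict total order on the states of A^d
    (∀ S ∈ DetStates E F s, ¬ IntvLt r S S) ∧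
    (∀ S ∈ DetStates E F s, ∀ T ∈ DetStates E F s, ∀ U ∈ DetStates E F s,
      IntvLt r S T → IntvLt r T U → IntvLt r S U) ∧
    (∀ S ∈ DetStates E F s, ∀ T ∈ DetStates E F s,
      S ≠ T → IntvLt r S T ∨ IntvLt r T S) ∧
    -- Wheeler axiom: in-degree-0 states of A^d precede states with in-degree > 0
    (∀ S ∈ DetStates E F s, ∀ T ∈ DetStates E F s,
      (∀ S' e, ¬ DetEdge E F s S' e S) → (∃ S' e, DetEdge E F s S' e T) →
        IntvLt r S T) ∧
    -- Wheeler axiom: strictly smaller labels go to strictly smaller states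
    (∀ S₁ e₁ T₁ S₂ e₂ T₂, DetEdge E F s S₁ e₁ T₁ → DetEdge E F s S₂ e₂ T₂ →
      e₁ < e₂ → IntvLt r T₁ T₂) ∧
    -- Wheeler axiom: equal labels from ordered sources go to weakly ordered targets
    (∀ S₁ T₁ S₂ T₂ e, DetEdge E F s S₁ e T₁ → DetEdge E F s S₂ e T₂ →
      IntvLt r S₁ S₂ → IntvLt r T₁ T₂ ∨ T₁ = T₂) ∧
    -- L(A^d) = L(A)
    (∀ α : List A,
      (α ∈ PrefL E F s ∧ ∃ β ∈ Lang E F s, Istr E s α = Istr E s β) ↔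
        α ∈ Lang E F s) :=
  stmt10_general E F s r hsrc hW
end

section
/- Let L ⊆ Σ* be a language. If L is a union of classes of an equivalence relation ∼ on Pref(L) that is right-invariant, convex, input-consistent, and of finite index, then L is recognized by a Wheeler DFA (constructed with the ∼-classes as states, ordered by the induced interval order). -/
variable {V : Type*} {A : Type*}

/-- The set of prefixes of words of a language. -/
def PrefSet (L : Set (List A)) : Set (List A) := {α | ∃ β, α ++ β ∈ L}

section Aux

variable {B : Type*} [LinearOrder B]

lemma colex_trichot (α β : List B) : ColexLt α β ∨ α = β ∨ ColexLt β α := by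
  rcases lt_trichotomy α.reverse β.reverse with h | h | h
  · exact .inl h
  · exact .inr (.inl (List.reverse_injective h))
  · exact .inr (.inr h)

lemma colex_trans {α β γ : List B} (h : ColexLt α β) (h' : ColexLt β γ) : ColexLt α γ := by
  have h1 : α.reverse < β.reverse := h
  have h2 : β.reverse < γ.reverse := h'
  exact (lt_trans h1 h2 : α.reverse < γ.reverse)

lemma colex_nil {β : List B} (h : β ≠ []) : ColexLt [] β := by
  obtain ⟨b, l, hl⟩ := List.exists_cons_of_ne_nil (by simpa using h : β.reverse ≠ [])
  unfold ColexLt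
  rw [List.reverse_nil, hl]
  exact List.Lex.nil

lemma colex_snoc_lt {α β : List B} {a b : B} (h : a < b) : ColexLt (α ++ [a]) (β ++ [b]) := by
  unfold ColexLt
  simp only [List.reverse_append, List.reverse_singleton, List.singleton_append]
  exact List.Lex.rel h

lemma colex_snoc_le {α β : List B} {a : B} (h : ColexLt α β) : ColexLt (α ++ [a]) (β ++ [a]) := by
  unfold ColexLt at *
  simp only [List.reverse_append, List.reverse_singleton, List.singleton_append]
  exact List.Lex.cons h

lemma reaches_equiv {V W A : Type*} (e : V ≃ W) (E : V → A → V → Prop) {s v : V} {α : List A}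
    (h : Reaches E s α v) :
    Reaches (fun x a y => E (e.symm x) a (e.symm y)) (e s) α (e v) := by
  induction h with
  | nil => exact .nil
  | snoc _ hE ih => exact .snoc ih (by simpa using hE)

lemma reaches_equiv' {V W A : Type*} (e : V ≃ W) (E : V → A → V → Prop) {s : V} {w : W}
    {α : List A}
    (h : Reaches (fun x a y => E (e.symm x) a (e.symm y)) (e s) α w) :
    Reaches E s α (e.symm w) := by
  induction h with
  | nil => rw [Equiv.symm_apply_apply]; exact .nil
  | snoc _ hE ih => exact .snoc ih hE

end Aux

/-- If `L` is a union of classes of an equivalence relation `∼` on `Pref(L)` that is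
right-invariant, convex, input-consistent and of finite index, then `L` is recognized
by a Wheeler DFA. -/
theorem stmt11 {A : Type*} [LinearOrder A] (L : Set (List A))
    (sim : List A → List A → Prop)
    -- ∼ is an equivalence relation on Pref(L)
    (hdom : ∀ α β, sim α β → α ∈ PrefSet L ∧ β ∈ PrefSet L)
    (hrefl : ∀ α ∈ PrefSet L, sim α α)
    (hsymm : ∀ α β, sim α β → sim β α)
    (htrans : ∀ α β γ, sim α β → sim β γ → sim α γ)
    -- right-invariant
    (hri : ∀ α β γ, sim α β → (α ++ γ) ∈ PrefSet L →
      ((β ++ γ) ∈ PrefSet L ∧ sim (α ++ γ) (β ++ γ)))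
    -- convex: every class is an interval of (Pref(L), ≺)
    (hconv : ∀ α β γ, sim α γ → β ∈ PrefSet L → ColexLt α β → ColexLt β γ → sim α β)
    -- input-consistent: all words of a class end with the same letter
    (hic : ∀ α β, sim α β → α.getLast? = β.getLast?)
    -- finite index
    (hfin : {Cl : Set (List A) | ∃ α ∈ PrefSet L, Cl = {β | sim α β}}.Finite)
    -- L is a union of ∼-classes
    (hunion : ∀ α β, α ∈ L → sim α β → β ∈ L) :
    ∃ (W : Type) (_ : Fintype W) (E : W → A → W → Prop) (F : Set W) (s : W)
      (r : W → W → Prop),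
      (∀ u a v v', E u a v → E u a v' → v = v') ∧
      (∀ u a, ¬ E u a s) ∧
      (∀ x : W, (∀ u a, ¬ E u a x) → x = s) ∧
      (∀ x : W, ∃ α, Reaches E s α x) ∧
      WheelerRel E r ∧
      Lang E F s = L := by
  classical
  by_cases hL : L = ∅
  · subst hL
    refine ⟨Unit, inferInstance, fun _ _ _ => False, ∅, (), fun _ _ => False,
      fun _ _ _ _ h _ => h.elim, fun _ _ h => h, fun _ _ => rfl,
      fun x => ⟨[], Reaches.nil⟩,
      ⟨⟨fun _ h => h, fun _ _ _ h _ => h.elim, fun x y hxy => absurd rfl hxy⟩,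
        fun _ _ _ h => by obtain ⟨_, _, h⟩ := h; exact h.elim,
        fun _ _ _ _ _ _ h _ _ => h.elim,
        fun _ _ _ _ _ h _ _ => h.elim⟩, ?_⟩
    ext α
    simp [Lang]
  · obtain ⟨ω, hω⟩ := Set.nonempty_iff_ne_empty.2 hL
    have hεP : ([] : List A) ∈ PrefSet L := ⟨ω, by simpa using hω⟩
    have hP_mem : ∀ α ∈ L, α ∈ PrefSet L := fun α h => ⟨[], by simpa using h⟩
    have hP_pref : ∀ (α : List A) (a : A), α ++ [a] ∈ PrefSet L → α ∈ PrefSet L := by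
      rintro α a ⟨β, hβ⟩
      exact ⟨[a] ++ β, by simpa [List.append_assoc] using hβ⟩
    set cl : List A → Set (List A) := fun α => {β | sim α β} with hcl_def
    have cl_eq : ∀ {α β}, sim α β → cl α = cl β := by
      intro α β h
      ext γ
      exact ⟨fun hg => htrans _ _ _ (hsymm _ _ h) hg, fun hg => htrans _ _ _ h hg⟩
    have mem_cl : ∀ {α}, α ∈ PrefSet L → α ∈ cl α := fun h => hrefl _ h
    set K : Set (Set (List A)) := {Cl | ∃ α ∈ PrefSet L, Cl = cl α} with hK_def
    have hKfin : K.Finite := hfin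
    letI : Fintype K := hKfin.fintype
    have mem_class_eq : ∀ (C : K) {α}, α ∈ C.1 → C.1 = cl α := by
      rintro ⟨C, α₀, hα₀, rfl⟩ α hα
      exact cl_eq hα
    have mem_P : ∀ (C : K) {α}, α ∈ C.1 → α ∈ PrefSet L := by
      rintro ⟨C, α₀, hα₀, rfl⟩ α h
      exact (hdom _ _ h).2
    have class_ne : ∀ C : K, ∃ α, α ∈ C.1 := by
      rintro ⟨C, α₀, hα₀, rfl⟩
      exact ⟨α₀, mem_cl hα₀⟩
    have class_eq_of_mem : ∀ (C D : K) {α}, α ∈ C.1 → α ∈ D.1 → C = D :=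
      fun C D α hC hD => Subtype.ext ((mem_class_eq C hC).trans (mem_class_eq D hD).symm)
    set E' : K → A → K → Prop :=
      fun u a v => ∃ α, α ∈ u.1 ∧ α ++ [a] ∈ PrefSet L ∧ α ++ [a] ∈ v.1 with hE'_def
    have hs'K : cl [] ∈ K := ⟨[], hεP, rfl⟩
    set s' : K := ⟨cl [], hs'K⟩ with hs'_def
    set F' : Set K := {C | ∃ α ∈ C.1, α ∈ L} with hF'_def
    set r' : K → K → Prop :=
      fun u v => u ≠ v ∧ ∃ α ∈ u.1, ∃ β ∈ v.1, ColexLt α β with hr'_def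
    -- key convexity transfer lemmas
    have key : ∀ (C D : K), C ≠ D → ∀ {α α' β}, α ∈ C.1 → α' ∈ C.1 → β ∈ D.1 →
        ColexLt α β → ColexLt α' β := by
      intro C D hne α α' β hα hα' hβ hlt
      rcases colex_trichot α' β with h | h | h
      · exact h
      · exact absurd (class_eq_of_mem C D hα' (by rw [h]; exact hβ)) hne
      · have hsim : sim α α' := by
          have hh := mem_class_eq C hα
          rw [hh] at hα'
          exact hα'
        have hsab : sim α β := hconv α β α' hsim (mem_P D hβ) hlt h
        have hβC : β ∈ C.1 := by rw [mem_class_eq C hα]; exact hsab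
        exact absurd (class_eq_of_mem C D hβC hβ) hne
    have key2 : ∀ (C D : K), C ≠ D → ∀ {α β β'}, α ∈ C.1 → β ∈ D.1 → β' ∈ D.1 →
        ColexLt α β → ColexLt α β' := by
      intro C D hne α β β' hα hβ hβ' hlt
      rcases colex_trichot α β' with h | h | h
      · exact h
      · exact absurd (class_eq_of_mem C D hα (by rw [h]; exact hβ')) hne
      · have hsim : sim β' β := by
          have hh := mem_class_eq D hβ'
          rw [hh] at hβ
          exact hβ
        have hsba : sim β' α := hconv β' α β hsim (mem_P C hα) h hlt
        have hαD : α ∈ D.1 := by rw [mem_class_eq D hβ']; exact hsba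
        exact absurd (class_eq_of_mem C D hα hαD) hne
    have r'_all : ∀ {u v : K}, r' u v → ∀ {α β}, α ∈ u.1 → β ∈ v.1 → ColexLt α β := by
      rintro u v ⟨hne, γ, hγ, δ, hδ, hlt⟩ α β hα hβ
      exact key2 u v hne hα hδ hβ (key u v hne hγ hα hδ hlt)
    -- strict total order
    have hST : StrictTotal r' := by
      refine ⟨fun x hx => hx.1 rfl, ?_, ?_⟩
      · intro x y z hxy hyz
        obtain ⟨α, hα⟩ := class_ne x
        obtain ⟨β, hβ⟩ := class_ne y
        obtain ⟨γ, hγ⟩ := class_ne z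
        have h1 : ColexLt α β := r'_all hxy hα hβ
        have h2 : ColexLt β γ := r'_all hyz hβ hγ
        have hxz : x ≠ z := by
          rintro rfl
          have hsim : sim α γ := by
            have hh := mem_class_eq x hα
            rw [hh] at hγ
            exact hγ
          have hsab : sim α β := hconv α β γ hsim (mem_P y hβ) h1 h2
          have hβx : β ∈ x.1 := by rw [mem_class_eq x hα]; exact hsab
          exact hxy.1 (class_eq_of_mem x y hβx hβ)
        exact ⟨hxz, α, hα, γ, hγ, colex_trans h1 h2⟩
      · intro x y hne
        obtain ⟨α, hα⟩ := class_ne x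
        obtain ⟨β, hβ⟩ := class_ne y
        rcases colex_trichot α β with h | h | h
        · exact .inl ⟨hne, α, hα, β, hβ, h⟩
        · exact absurd (class_eq_of_mem x y hα (by rw [h]; exact hβ)) hne
        · exact .inr ⟨hne.symm, β, hβ, α, hα, h⟩
    -- s' has no incoming edges
    have s'_no_in : ∀ (u : K) (a : A), ¬ E' u a s' := by
      rintro u a ⟨α, hα, hPa, hmem⟩
      have hsim : sim [] (α ++ [a]) := hmem
      have hlast := hic _ _ hsim
      simp [List.getLast?_concat] at hlast
    -- unique source
    have unique_src : ∀ x : K, (∀ u a, ¬ E' u a x) → x = s' := by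
      intro x hx
      obtain ⟨α, hα⟩ := class_ne x
      rcases List.eq_nil_or_concat' α with rfl | ⟨σ, a, rfl⟩
      · exact class_eq_of_mem x s' hα (mem_cl hεP)
      · have hmem : σ ++ [a] ∈ PrefSet L := mem_P x hα
        have hσP : σ ∈ PrefSet L := hP_pref σ a hmem
        have he : E' ⟨cl σ, σ, hσP, rfl⟩ a x := ⟨σ, mem_cl hσP, hmem, hα⟩
        exact absurd he (hx _ a)
    -- determinism
    have det : ∀ (u : K) (a : A) (v v' : K), E' u a v → E' u a v' → v = v' := by
      rintro u a v v' ⟨α, hα, hP1, h1⟩ ⟨α', hα', hP2, h2⟩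
      have hs : sim α α' := by
        have hh := mem_class_eq u hα
        rw [hh] at hα'
        exact hα'
      have hsa := (hri α α' [a] hs hP1).2
      have h2' : α' ++ [a] ∈ v.1 := by rw [mem_class_eq v h1]; exact hsa
      exact class_eq_of_mem v v' h2' h2
    -- reachability
    have R1 : ∀ α ∈ PrefSet L, ∃ v : K, v.1 = cl α ∧ Reaches E' s' α v := by
      intro α
      induction α using List.reverseRecOn with
      | nil => exact fun _ => ⟨s', rfl, .nil⟩
      | append_singleton σ a ih =>
        intro hmem
        obtain ⟨v, hv, hr⟩ := ih (hP_pref σ a hmem)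
        refine ⟨⟨cl (σ ++ [a]), σ ++ [a], hmem, rfl⟩, rfl,
          .snoc hr ⟨σ, ?_, hmem, mem_cl hmem⟩⟩
        rw [hv]
        exact mem_cl (hP_pref σ a hmem)
    have R2 : ∀ {α} {v : K}, Reaches E' s' α v → α ∈ PrefSet L ∧ v.1 = cl α := by
      intro α v h
      induction h with
      | nil => exact ⟨hεP, rfl⟩
      | @snoc σ u w a _ hE ih =>
        obtain ⟨hPα, hclu⟩ := ih
        obtain ⟨β, hβ, hβP, hβw⟩ := hE
        have hs : sim σ β := by rw [hclu] at hβ; exact hβ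
        have h2 := hri β σ [a] (hsymm _ _ hs) hβP
        refine ⟨h2.1, ?_⟩
        rw [mem_class_eq _ hβw]
        exact cl_eq h2.2
    have reach_all : ∀ x : K, ∃ α, Reaches E' s' α x := by
      intro x
      obtain ⟨α, hα⟩ := class_ne x
      obtain ⟨v, hv, hr⟩ := R1 α (mem_P x hα)
      have hvx : v = x := Subtype.ext (hv.trans (mem_class_eq x hα).symm)
      exact ⟨α, hvx ▸ hr⟩
    -- language
    have hLang : Lang E' F' s' = L := by
      ext α
      constructor
      · rintro ⟨w, ⟨γ, hγ, hγL⟩, hr⟩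
        obtain ⟨hPα, hclw⟩ := R2 hr
        have hs : sim α γ := by rw [hclw] at hγ; exact hγ
        exact hunion γ α hγL (hsymm _ _ hs)
      · intro hα
        have hPα : α ∈ PrefSet L := hP_mem α hα
        obtain ⟨v, hv, hr⟩ := R1 α hPα
        exact ⟨v, ⟨α, by rw [hv]; exact mem_cl hPα, hα⟩, hr⟩
    -- Wheeler axioms
    have W1 : ∀ x w : K, (∀ u a, ¬ E' u a x) → (∃ u a, E' u a w) → r' x w := by
      intro x w hx hw
      have hxs : x = s' := unique_src x hx
      obtain ⟨u, a, hu⟩ := hw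
      have hws : w ≠ s' := by rintro rfl; exact s'_no_in u a hu
      subst hxs
      obtain ⟨β, hβ⟩ := class_ne w
      have hβne : β ≠ [] := by
        rintro rfl
        exact hws (class_eq_of_mem w s' hβ (mem_cl hεP))
      exact ⟨fun h => hws h.symm, [], mem_cl hεP, β, hβ, colex_nil hβne⟩
    have W2 : ∀ u₁ a₁ v₁ u₂ a₂ v₂, E' u₁ a₁ v₁ → E' u₂ a₂ v₂ → a₁ < a₂ → r' v₁ v₂ := by
      rintro u₁ a₁ v₁ u₂ a₂ v₂ ⟨α₁, _, _, h₁⟩ ⟨α₂, _, _, h₂⟩ hlt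
      have hne : v₁ ≠ v₂ := by
        rintro rfl
        have hs : sim (α₁ ++ [a₁]) (α₂ ++ [a₂]) := by
          have hh := mem_class_eq v₁ h₁
          rw [hh] at h₂
          exact h₂
        have hlast := hic _ _ hs
        simp [List.getLast?_concat] at hlast
        exact absurd hlast hlt.ne
      exact ⟨hne, _, h₁, _, h₂, colex_snoc_lt hlt⟩
    have W3 : ∀ u₁ v₁ u₂ v₂ a, E' u₁ a v₁ → E' u₂ a v₂ → r' u₁ u₂ → r' v₁ v₂ ∨ v₁ = v₂ := by
      rintro u₁ v₁ u₂ v₂ a ⟨α₁, hα₁, _, h₁⟩ ⟨α₂, hα₂, _, h₂⟩ hr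
      by_cases hv : v₁ = v₂
      · exact .inr hv
      · exact .inl ⟨hv, _, h₁, _, h₂, colex_snoc_le (r'_all hr hα₁ hα₂)⟩
    -- transport along an equivalence to `Fin n`
    set e : K ≃ Fin (Fintype.card K) := Fintype.equivFin K with he_def
    refine ⟨Fin (Fintype.card K), inferInstance,
      fun x a y => E' (e.symm x) a (e.symm y), e.symm ⁻¹' F', e s',
      fun x y => r' (e.symm x) (e.symm y), ?_, ?_, ?_, ?_, ?_, ?_⟩
    · intro u a v v' h h'
      exact e.symm.injective (det _ _ _ _ h h')
    · intro u a h
      rw [Equiv.symm_apply_apply] at h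
      exact s'_no_in _ _ h
    · intro x hx
      have hx' : ∀ u a, ¬ E' u a (e.symm x) := by
        intro u a h
        exact hx (e u) a (by simpa using h)
      have := unique_src _ hx'
      exact e.symm.injective (this.trans (e.symm_apply_apply s').symm)
    · intro x
      obtain ⟨α, hr⟩ := reach_all (e.symm x)
      have := reaches_equiv e E' hr
      rw [e.apply_symm_apply] at this
      exact ⟨α, this⟩
    · refine ⟨⟨fun x => hST.1 _, fun x y z => hST.2.1 _ _ _,
        fun x y h => hST.2.2 _ _ fun hh => h (e.symm.injective hh)⟩, ?_, ?_, ?_⟩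
      · intro x w hx hw
        refine W1 _ _ ?_ ?_
        · intro u a h
          exact hx (e u) a (by simpa using h)
        · obtain ⟨u, a, hu⟩ := hw
          exact ⟨e.symm u, a, hu⟩
      · intro u₁ a₁ v₁ u₂ a₂ v₂ h₁ h₂ hlt
        exact W2 _ _ _ _ _ _ h₁ h₂ hlt
      · intro u₁ v₁ u₂ v₂ a h₁ h₂ hr
        rcases W3 _ _ _ _ _ h₁ h₂ hr with h | h
        · exact .inl h
        · exact .inr (e.symm.injective h)
    · ext α
      constructor
      · rintro ⟨w, hw, hr⟩
        have hr' := reaches_equiv' e E' hr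
        rw [← hLang]
        exact ⟨e.symm w, hw, hr'⟩
      · intro h
        rw [← hLang] at h
        obtain ⟨w, hw, hr⟩ := h
        exact ⟨e w, by simpa using hw, reaches_equiv e E' hr⟩
end

section
/- Every Wheeler graph is path coherent: for any Wheeler order < on its nodes, any <-consecutive range of nodes [i,j], and any string α ∈ Σ*, the set of nodes reachable from nodes in [i,j] by a path labeled α is itself a <-consecutive range. -/
variable {V : Type*} {A : Type*}

lemma reaches_nil' {V A : Type*} {E : V → A → V → Prop} {s w : V}
    (h : Reaches E s [] w) : w = s := by
  generalize hγ : ([] : List A) = γ at h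
  cases h with
  | nil => rfl
  | snoc h1 h2 => simp at hγ

lemma reaches_snoc' {V A : Type*} {E : V → A → V → Prop} {s w : V} {β : List A} {a : A}
    (h : Reaches E s (β ++ [a]) w) : ∃ v, Reaches E s β v ∧ E v a w := by
  generalize hγ : β ++ [a] = γ at h
  cases h with
  | nil => simp at hγ
  | @snoc α' u w' a' h1 h2 =>
    obtain ⟨rfl, h4⟩ := List.append_inj' hγ rfl
    obtain rfl : a' = a := by simpa using h4.symm
    exact ⟨u, h1, h2⟩

/-- Path coherence of Wheeler graphs: for any Wheeler order `r`, any `r`-convex set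
of nodes `S`, and any string `α`, the set of nodes reachable from nodes of `S` by a
path labeled `α` is itself `r`-convex. -/
theorem stmt14 {V A : Type*} [LinearOrder A]
    (E : V → A → V → Prop) (r : V → V → Prop)
    (hW : WheelerRel E r)
    (S : Set V)
    (hS : ∀ x ∈ S, ∀ z ∈ S, ∀ y, r x y → r y z → y ∈ S)
    (α : List A) :
    ∀ x ∈ {w : V | ∃ u ∈ S, Reaches E u α w},
      ∀ z ∈ {w : V | ∃ u ∈ S, Reaches E u α w},
        ∀ y, r x y → r y z → y ∈ {w : V | ∃ u ∈ S, Reaches E u α w} := by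
  obtain ⟨⟨hirr, htrans, htot⟩, hmin, hlt, heq⟩ := hW
  induction α using List.reverseRecOn with
  | nil =>
    rintro x ⟨ux, hux, hrx⟩ z ⟨uz, huz, hrz⟩ y hxy hyz
    obtain rfl := reaches_nil' hrx
    obtain rfl := reaches_nil' hrz
    exact ⟨y, hS _ hux _ huz y hxy hyz, Reaches.nil⟩
  | append_singleton β a ih =>
    rintro x ⟨ux, hux, hrx⟩ z ⟨uz, huz, hrz⟩ y hxy hyz
    obtain ⟨vx, hrvx, hex⟩ := reaches_snoc' hrx
    obtain ⟨vz, hrvz, hez⟩ := reaches_snoc' hrz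
    -- y has an in-edge
    obtain ⟨u, b, he⟩ : ∃ u b, E u b y := by
      by_contra hno
      push_neg at hno
      exact hirr x (htrans _ _ _ hxy (hmin y x hno ⟨vx, a, hex⟩))
    -- its label is a
    have hba : ¬ b < a := fun h =>
      hirr x (htrans _ _ _ hxy (hlt u b y vx a x he hex h))
    have hab : ¬ a < b := fun h =>
      hirr y (htrans _ _ _ hyz (hlt vz a z u b y hez he h))
    obtain rfl : b = a := le_antisymm (not_lt.1 hab) (not_lt.1 hba)
    -- the source u lies weakly between vx and vz
    have h1 : ¬ r u vx := fun h => by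
      rcases heq u y vx x b he hex h with h' | h'
      · exact hirr x (htrans _ _ _ hxy h')
      · exact hirr y (h' ▸ hxy)
    have h2 : ¬ r vz u := fun h => by
      rcases heq vz z u y b hez he h with h' | h'
      · exact hirr z (htrans _ _ _ h' hyz)
      · exact hirr y (h' ▸ hyz)
    have hu : ∃ s0 ∈ S, Reaches E s0 β u := by
      rcases eq_or_ne u vx with rfl | hne1
      · exact ⟨ux, hux, hrvx⟩
      rcases eq_or_ne u vz with rfl | hne2
      · exact ⟨uz, huz, hrvz⟩
      have hx1 : r vx u := (htot _ _ hne1.symm).resolve_right h1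
      have hx2 : r u vz := (htot _ _ hne2).resolve_right h2
      exact ih vx ⟨ux, hux, hrvx⟩ vz ⟨uz, huz, hrvz⟩ u hx1 hx2
    obtain ⟨s0, hs0, hrs0⟩ := hu
    exact ⟨s0, hs0, Reaches.snoc hrs0 he⟩
end

section
/- Let G be an input-consistent edge-labeled graph with node set V totally ordered by <, and let L be the list of edges (a,u,v) sorted lexicographically by (label, source rank, destination rank). Then < satisfies the Wheeler properties if and only if for every pair of consecutive edges (a_i,u_i,v_i),(a_{i+1},u_{i+1},v_{i+1}) in L we have: a_i = a_{i+1} implies v_i ≤ v_{i+1}, and a_i ≠ a_{i+1} implies v_i < v_{i+1} (assuming in-degree-0 nodes precede all others in <). -/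
/-!
The Wheeler properties say exactly that every lexicographically smaller edge `(a₁,u₁,v₁)` and
larger edge `(a₂,u₂,v₂)` satisfy the consecutive-edge condition. Along the sorted list labels
never decrease, so that condition composes: over a run of equal labels destinations only grow,
and one label change anywhere makes the destinations strictly increase. Hence it suffices to
check it between neighbours.
-/

namespace List

variable {α : Type*} {R S : α → α → Prop} {l : List α}

theorem IsChain.and (hR : l.IsChain R) (hS : l.IsChain S) :
    l.IsChain fun a b => R a b ∧ S a b := by
  rw [isChain_iff_getElem] at *
  exact fun i h => ⟨hR i h, hS i h⟩

theorem Pairwise.rel_of_mem_of_rel [Std.Asymm R] (hl : l.Pairwise fun a b => R a b ∧ S a b)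
    {a b : α} (ha : a ∈ l) (hb : b ∈ l) (hab : R a b) : S a b := by
  induction l with
  | nil => simp at ha
  | cons x l ih =>
    obtain ⟨hx, hl⟩ := pairwise_cons.1 hl
    rcases mem_cons.1 ha with rfl | ha' <;> rcases mem_cons.1 hb with rfl | hb'
    · exact absurd hab (irrefl _)
    · exact (hx b hb').2
    · exact absurd (hx a ha').1 (asymm hab)
    · exact ih hl ha' hb'

theorem forall_mem_rel_iff_isChain [Std.Asymm R] (hl : l.Pairwise R)
    (htrans : ∀ a b c, R a b ∧ S a b → R b c ∧ S b c → R a c ∧ S a c) :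
    (∀ a ∈ l, ∀ b ∈ l, R a b → S a b) ↔ l.IsChain S := by
  refine ⟨fun h => hl.isChain.imp_of_mem_imp fun a b ha hb hab => h a ha b hb hab, fun hS => ?_⟩
  have : Trans (fun a b => R a b ∧ S a b) (fun a b => R a b ∧ S a b)
      (fun a b => R a b ∧ S a b) := ⟨htrans _ _ _⟩
  have hRS := isChain_iff_pairwise.1 (hl.isChain.and hS)
  exact fun a ha b hb hab => hRS.rel_of_mem_of_rel ha hb hab

end List

section Wheeler

variable {V A : Type*} [LinearOrder V] [LinearOrder A]

abbrev EdgeLex : A × V × V → A × V × V → Prop :=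
  Prod.Lex (· < ·) (Prod.Lex (· < ·) (· < ·))

def WheelerStep (e₁ e₂ : A × V × V) : Prop :=
  (e₁.1 = e₂.1 → e₁.2.2 ≤ e₂.2.2) ∧ (e₁.1 ≠ e₂.1 → e₁.2.2 < e₂.2.2)

def IsWheeler (E : V → A → V → Prop) : Prop :=
  (∀ u₁ a₁ v₁ u₂ a₂ v₂, E u₁ a₁ v₁ → E u₂ a₂ v₂ → a₁ < a₂ → v₁ < v₂) ∧
    (∀ u₁ v₁ u₂ v₂ a, E u₁ a v₁ → E u₂ a v₂ → u₁ < u₂ → v₁ ≤ v₂)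

theorem edgeLex_iff {e₁ e₂ : A × V × V} : EdgeLex e₁ e₂ ↔
    e₁.1 < e₂.1 ∨ e₁.1 = e₂.1 ∧ (e₁.2.1 < e₂.2.1 ∨ e₁.2.1 = e₂.2.1 ∧ e₁.2.2 < e₂.2.2) := by
  rw [EdgeLex, Prod.lex_def, Prod.lex_def]

theorem label_le_of_edgeLex {e₁ e₂ : A × V × V} (h : EdgeLex e₁ e₂) : e₁.1 ≤ e₂.1 := by
  rcases edgeLex_iff.1 h with h | ⟨h, -⟩
  exacts [h.le, h.le]

theorem WheelerStep.trans {e₁ e₂ e₃ : A × V × V} (h₁₂ : e₁.1 ≤ e₂.1) (h₂₃ : e₂.1 ≤ e₃.1)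
    (hs₁₂ : WheelerStep e₁ e₂) (hs₂₃ : WheelerStep e₂ e₃) : WheelerStep e₁ e₃ := by
  obtain ⟨le₁₂, lt₁₂⟩ := hs₁₂
  obtain ⟨le₂₃, lt₂₃⟩ := hs₂₃
  rcases h₁₂.lt_or_eq with h₁₂ | h₁₂ <;> rcases h₂₃.lt_or_eq with h₂₃ | h₂₃
  · exact ⟨fun h => absurd h (h₁₂.trans h₂₃).ne, fun _ => (lt₁₂ h₁₂.ne).trans (lt₂₃ h₂₃.ne)⟩
  · exact ⟨fun h => absurd h (h₂₃ ▸ h₁₂).ne, fun _ => (lt₁₂ h₁₂.ne).trans_le (le₂₃ h₂₃)⟩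
  · exact ⟨fun h => absurd h (h₁₂ ▸ h₂₃).ne, fun _ => (le₁₂ h₁₂).trans_lt (lt₂₃ h₂₃.ne)⟩
  · exact ⟨fun _ => (le₁₂ h₁₂).trans (le₂₃ h₂₃), fun h => absurd (h₁₂.trans h₂₃) h⟩

theorem edgeLex_and_wheelerStep_trans (e₁ e₂ e₃ : A × V × V) :
    EdgeLex e₁ e₂ ∧ WheelerStep e₁ e₂ → EdgeLex e₂ e₃ ∧ WheelerStep e₂ e₃ →
      EdgeLex e₁ e₃ ∧ WheelerStep e₁ e₃
  | ⟨l₁₂, s₁₂⟩, ⟨l₂₃, s₂₃⟩ =>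
    ⟨_root_.trans l₁₂ l₂₃,
      s₁₂.trans (label_le_of_edgeLex l₁₂) (label_le_of_edgeLex l₂₃) s₂₃⟩

theorem isWheeler_iff_forall_edgeLex {E : V → A → V → Prop} : IsWheeler E ↔
    ∀ e₁ e₂ : A × V × V, E e₁.2.1 e₁.1 e₁.2.2 → E e₂.2.1 e₂.1 e₂.2.2 →
      EdgeLex e₁ e₂ → WheelerStep e₁ e₂ := by
  constructor
  · rintro ⟨hlabel, hsource⟩ ⟨a₁, u₁, v₁⟩ ⟨a₂, u₂, v₂⟩ he₁ he₂ hlex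
    rcases edgeLex_iff.1 hlex with h | ⟨rfl, h | ⟨-, h⟩⟩
    · exact ⟨fun h' => absurd h' h.ne, fun _ => hlabel _ _ _ _ _ _ he₁ he₂ h⟩
    · exact ⟨fun _ => hsource _ _ _ _ _ he₁ he₂ h, fun h' => absurd rfl h'⟩
    · exact ⟨fun _ => h.le, fun h' => absurd rfl h'⟩
  · intro h
    refine ⟨fun u₁ a₁ v₁ u₂ a₂ v₂ he₁ he₂ ha => ?_, fun u₁ v₁ u₂ v₂ a he₁ he₂ hu => ?_⟩
    · exact (h (a₁, u₁, v₁) (a₂, u₂, v₂) he₁ he₂ (edgeLex_iff.2 (.inl ha))).2 ha.ne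
    · exact (h (a, u₁, v₁) (a, u₂, v₂) he₁ he₂ (edgeLex_iff.2 (.inr ⟨rfl, .inl hu⟩))).1 rfl

end Wheeler

theorem stmt16_general {V A : Type*} [LinearOrder V] [LinearOrder A]
    (E : V → A → V → Prop)
    (Lst : List (A × V × V))
    (hmem : ∀ a u v, (a, u, v) ∈ Lst ↔ E u a v)
    (hsorted : Lst.Pairwise (Prod.Lex (· < ·) (Prod.Lex (· < ·) (· < ·)))) :
    ((∀ u₁ a₁ v₁ u₂ a₂ v₂, E u₁ a₁ v₁ → E u₂ a₂ v₂ → a₁ < a₂ → v₁ < v₂) ∧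
     (∀ u₁ v₁ u₂ v₂ a, E u₁ a v₁ → E u₂ a v₂ → u₁ < u₂ → v₁ ≤ v₂)) ↔
    Lst.Chain' (fun e₁ e₂ =>
      (e₁.1 = e₂.1 → e₁.2.2 ≤ e₂.2.2) ∧ (e₁.1 ≠ e₂.1 → e₁.2.2 < e₂.2.2)) := by
  have hedges : ∀ e : A × V × V, e ∈ Lst ↔ E e.2.1 e.1 e.2.2 := fun e => hmem _ _ _
  change IsWheeler E ↔ Lst.IsChain WheelerStep
  rw [isWheeler_iff_forall_edgeLex, ← List.forall_mem_rel_iff_isChain (R := EdgeLex) hsorted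
    edgeLex_and_wheelerStep_trans]
  simp only [hedges]
  exact ⟨fun h e₁ he₁ e₂ he₂ => h e₁ e₂ he₁ he₂, fun h e₁ e₂ he₁ he₂ => h e₁ he₁ e₂ he₂⟩

/-- Checking Wheelerness of a given total order in linear time: let `G` be an
input-consistent labeled graph over a totally ordered node set (with in-degree-0
nodes preceding all others), and let `Lst` be the list of its edges `(a, u, v)`
sorted lexicographically by (label, source, destination). Then the order satisfies
the Wheeler properties iff every pair of consecutive edges `(a₁,u₁,v₁), (a₂,u₂,v₂)`
in `Lst` satisfies: `a₁ = a₂ → v₁ ≤ v₂` and `a₁ ≠ a₂ → v₁ < v₂`. -/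
theorem stmt16 {V A : Type*} [LinearOrder V] [LinearOrder A]
    (E : V → A → V → Prop)
    -- input-consistency
    (hic : ∀ (w : V) (u a u' a'), E u a w → E u' a' w → a = a')
    -- in-degree-0 nodes precede all others
    (hsrc : ∀ x w : V, (∀ u a, ¬ E u a x) → (∃ u a, E u a w) → x < w)
    (Lst : List (A × V × V))
    (hmem : ∀ a u v, (a, u, v) ∈ Lst ↔ E u a v)
    (hsorted : Lst.Pairwise (Prod.Lex (· < ·) (Prod.Lex (· < ·) (· < ·)))) :
    ((∀ u₁ a₁ v₁ u₂ a₂ v₂, E u₁ a₁ v₁ → E u₂ a₂ v₂ → a₁ < a₂ → v₁ < v₂) ∧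
     (∀ u₁ v₁ u₂ v₂ a, E u₁ a v₁ → E u₂ a v₂ → u₁ < u₂ → v₁ ≤ v₂)) ↔
    Lst.Chain' (fun e₁ e₂ =>
      (e₁.1 = e₂.1 → e₁.2.2 ≤ e₂.2.2) ∧ (e₁.1 ≠ e₂.1 → e₁.2.2 < e₂.2.2)) :=
  stmt16_general E Lst hmem hsorted
end
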